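/- arXiv:0910.0662 — 10 statements merged into one kernel-verified Lean document; each statement's English description precedes it below -/
import Mathlib

section
/- Let h ∈ F_H, and let v_Z ∈ V and v_F ∈ F be vectors with v_F − v_Z ∈ H. Then there is exactly one linear functional φ : V → ℂ that vanishes identically on F and satisfies φ(x) = Q(h, x) for all x ∈ H; moreover this φ satisfies φ(v_Z) = Q(v_F − v_Z, h). (This is the computational content of the paper's Lemma comparing the two descriptions J₁(H) and J₂(H) of the intermediate Jacobian of a polarized Hodge structure of weight −1: the two constructions give rise to the same point.) -/
/-- Comparing the two descriptions `J₁(H)` and `J₂(H)` of the intermediate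
Jacobian of a polarized Hodge structure of weight `-1`: given `h ∈ F ∩ H` and liftings
`v_Z`, `v_F` with `v_F - v_Z ∈ H`, there is exactly one linear functional `φ : V → ℂ`
vanishing on `F` and restricting to `Q(h, -)` on `H`, and it satisfies
`φ(v_Z) = Q(v_F - v_Z, h)`. -/
theorem stmt0 {V : Type*} [AddCommGroup V] [Module ℂ V] [FiniteDimensional ℂ V]
    (H F : Submodule ℂ V) (hsum : H ⊔ F = ⊤)
    (Q : H →ₗ[ℂ] H →ₗ[ℂ] ℂ)
    (halt : ∀ x y : H, Q x y = - Q y x)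
    (hiso : ∀ x y : H, (x : V) ∈ F → (y : V) ∈ F → Q x y = 0)
    (h : V) (hhF : h ∈ F) (hhH : h ∈ H)
    (vZ vF : V) (hvF : vF ∈ F) (hdiff : vF - vZ ∈ H) :
    (∃! φ : V →ₗ[ℂ] ℂ,
        (∀ x ∈ F, φ x = 0) ∧ (∀ x : H, φ x = Q ⟨h, hhH⟩ x)) ∧
    (∀ φ : V →ₗ[ℂ] ℂ,
        ((∀ x ∈ F, φ x = 0) ∧ (∀ x : H, φ x = Q ⟨h, hhH⟩ x)) →
        φ vZ = Q ⟨vF - vZ, hdiff⟩ ⟨h, hhH⟩) := by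
  constructor
  · -- existence and uniqueness
    -- build via LinearPMap.sup
    set f : V →ₗ.[ℂ] ℂ := ⟨H, Q ⟨h, hhH⟩⟩ with hf
    set g : V →ₗ.[ℂ] ℂ := ⟨F, 0⟩ with hg
    have compat : ∀ (x : f.domain) (y : g.domain), (x : V) = y → f x = g y := by
      intro x y hxy
      have hxF : (x : V) ∈ F := by rw [hxy]; exact y.2
      have : f x = Q ⟨h, hhH⟩ x := rfl
      rw [this, hiso ⟨h, hhH⟩ x hhF hxF]
      rfl
    set s : V →ₗ.[ℂ] ℂ := f.sup g compat with hs
    have hsdom : s.domain = ⊤ := by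
      rw [hs, LinearPMap.domain_sup]; exact hsum
    refine ⟨s.toFun.comp ((LinearEquiv.ofEq ⊤ s.domain hsdom.symm).toLinearMap.comp
      (Submodule.topEquiv (R := ℂ) (M := V)).symm.toLinearMap), ⟨?_, ?_⟩, ?_⟩
    · intro x hxF
      have hle := f.right_le_sup g compat
      have := hle.2 (x := ⟨x, hxF⟩)
        (y := (LinearEquiv.ofEq ⊤ s.domain hsdom.symm) ((Submodule.topEquiv).symm x)) rfl
      simp only [LinearMap.comp_apply]
      exact this.symm
    · intro x
      have hle := f.left_le_sup g compat
      have := hle.2 (x := ⟨(x : V), x.2⟩)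
        (y := (LinearEquiv.ofEq ⊤ s.domain hsdom.symm) ((Submodule.topEquiv).symm (x : V))) rfl
      simp only [LinearMap.comp_apply]
      exact this.symm
    · intro ψ ⟨hψF, hψH⟩
      -- uniqueness: both agree on H and F, which span V
      apply LinearMap.ext
      intro v
      set φ := s.toFun.comp ((LinearEquiv.ofEq ⊤ s.domain hsdom.symm).toLinearMap.comp
        (Submodule.topEquiv (R := ℂ) (M := V)).symm.toLinearMap) with hφ
      have hφF : ∀ x ∈ F, φ x = 0 := by
        intro x hxF
        have hle := f.right_le_sup g compat
        have := hle.2 (x := ⟨x, hxF⟩)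
          (y := (LinearEquiv.ofEq ⊤ s.domain hsdom.symm) ((Submodule.topEquiv).symm x)) rfl
        simp only [hφ, LinearMap.comp_apply]
        exact this.symm
      have hφH : ∀ x : H, φ x = Q ⟨h, hhH⟩ x := by
        intro x
        have hle := f.left_le_sup g compat
        have := hle.2 (x := ⟨(x : V), x.2⟩)
          (y := (LinearEquiv.ofEq ⊤ s.domain hsdom.symm) ((Submodule.topEquiv).symm (x : V))) rfl
        simp only [hφ, LinearMap.comp_apply]
        exact this.symm
      have hker : H ⊔ F ≤ LinearMap.ker (ψ - φ) := by
        apply sup_le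
        · intro x hxH
          simp only [LinearMap.mem_ker, LinearMap.sub_apply]
          rw [hψH ⟨x, hxH⟩, hφH ⟨x, hxH⟩, sub_self]
        · intro x hxF
          simp only [LinearMap.mem_ker, LinearMap.sub_apply]
          rw [hψF x hxF, hφF x hxF, sub_self]
      have : ψ - φ = 0 := by
        apply LinearMap.ext
        intro w
        have : w ∈ LinearMap.ker (ψ - φ) := hker (hsum ▸ Submodule.mem_top)
        simpa using this
      have := congrArg (fun m => m v) this
      simpa [sub_eq_zero] using this
  · -- the value at vZ
    intro φ ⟨hφF, hφH⟩
    have h1 : φ vF = 0 := hφF vF hvF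
    have h2 : φ (vF - vZ) = Q ⟨h, hhH⟩ ⟨vF - vZ, hdiff⟩ := hφH ⟨vF - vZ, hdiff⟩
    have : φ vZ = φ vF - φ (vF - vZ) := by
      rw [← map_sub]; congr 1; abel
    rw [this, h1, h2, halt ⟨vF - vZ, hdiff⟩ ⟨h, hhH⟩]
    ring
end

section
/- There is a family of rational constants C(m,p,q,b,j), depending only on the integers m, p, q, b, j, with the following property: for every datum (H, I^{•,•}, N, Y, N⁺) as in the context, every h ∈ H, and every primitive decomposition (h^{p,q}(b)) of h, one has for all p, q ∈ ℤ and all integers 0 ≤ b ≤ m−p−q: h^{p,q}(b) = Σ_{j≥0} C(m,p,q,b,j) · (N⁺)^j N^{b+j} (h^{p+b,q+b}), where h^{p+b,q+b} denotes the I^{p+b,q+b}-component of h and the sum is finite because N^{b+j}(h^{p+b,q+b}) = 0 for all sufficiently large j. -/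
/-!
Grouping the primitive decomposition by bidegree gives
`h^{p+b,q+b} = ∑ₐ (N⁺)^a h^{p+b-a,q+b-a}(a)`. The sl₂ relation gives, for a primitive `v` of
weight `ℓ`, `N^a (N⁺)^b v = R(a,b,ℓ) (N⁺)^{b-a} v` with `R(a,b,ℓ) = 0` for `a > b`. Hence, with
`ℓ = m - p - q`,
`(N⁺)^j N^{b+j} h^{p+b,q+b} = ∑_{k ≥ j} R(b+j, b+k, ℓ+2k) (N⁺)^k h^{p-k,q-k}(b+k)`,
an upper-triangular system in `(j, k)` whose diagonal entries are positive as `b ≤ ℓ`. Taking for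
`C(m,p,q,b,·)` the first row of the inverse matrix isolates the term `k = 0`, i.e. `h^{p,q}(b)`.
-/

open Finset

namespace DirectSum.IsInternal

variable {ι R V : Type*} [DecidableEq ι] [Semiring R] [AddCommMonoid V] [Module R V]
  {A : ι → Submodule R V}

noncomputable def proj (h : IsInternal A) (i : ι) : V →ₗ[R] V :=
  (A i).subtype ∘ₗ component R ι (fun i => A i) i ∘ₗ
    (LinearEquiv.ofBijective (coeLinearMap A) h).symm.toLinearMap

theorem proj_apply_of_mem (h : IsInternal A) {i j : ι} {x : V} (hx : x ∈ A i) :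
    h.proj j x = if i = j then x else 0 := by
  simp only [proj, LinearMap.comp_apply, LinearEquiv.coe_coe, ← apply_eq_component]
  split_ifs with hij
  · subst hij
    simp [h.ofBijective_coeLinearMap_of_mem hx]
  · simp [h.ofBijective_coeLinearMap_of_mem_ne hij hx]

theorem proj_finsum (h : IsInternal A) {u : ι → V} (hu : ∀ i, u i ∈ A i)
    (hfin : (Function.support u).Finite) (j : ι) : h.proj j (∑ᶠ i, u i) = u j := by
  rw [map_finsum _ hfin, finsum_eq_single _ j fun i hij => by
    rw [h.proj_apply_of_mem (hu i), if_neg hij]]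
  simp [h.proj_apply_of_mem (hu j)]

end DirectSum.IsInternal

namespace PrimitiveDecomposition

/-- For `a ≤ b ≤ ℓ` this is the paper's `R(a,b,ℓ) = b!(ℓ+a-b)!/((ℓ-b)!(b-a)!)`; the factor
`i = b` makes it vanish for `b < a`. -/
def loweringCoeff (a b : ℕ) (ℓ : ℤ) : ℤ :=
  ∏ i ∈ range a, ((b - i) * (ℓ - b + i + 1))

theorem loweringCoeff_succ (a b : ℕ) (ℓ : ℤ) :
    loweringCoeff (a + 1) b ℓ = loweringCoeff a b ℓ * ((b - a) * (ℓ - b + a + 1)) :=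
  prod_range_succ _ _

theorem loweringCoeff_eq_zero_of_lt {a b : ℕ} (h : b < a) (ℓ : ℤ) : loweringCoeff a b ℓ = 0 :=
  prod_eq_zero (mem_range.mpr h) (by simp)

theorem loweringCoeff_pos {a b : ℕ} {ℓ : ℤ} (hab : a ≤ b) (hbℓ : b ≤ ℓ) :
    0 < loweringCoeff a b ℓ :=
  prod_pos fun i hi => by
    have := mem_range.mp hi
    apply mul_pos <;> omega

section Triangular

variable {K : Type*} [DivisionRing K]

/-- Forward substitution: the first row of the inverse of an upper-triangular matrix `A`. -/
def triangularInv (A : ℕ → ℕ → K) (k : ℕ) : K :=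
  ((if k = 0 then 1 else 0) - ∑ i : Fin k, triangularInv A i * A i k) / A k k
termination_by k
decreasing_by exact i.isLt

theorem sum_triangularInv_mul {A : ℕ → ℕ → K} (hA : ∀ j k, k < j → A j k = 0)
    (hdiag : ∀ k, A k k ≠ 0) {k n : ℕ} (hk : k < n) :
    ∑ j ∈ range n, triangularInv A j * A j k = if k = 0 then 1 else 0 := by
  have hsub : range (k + 1) ⊆ range n := range_subset_range.mpr hk
  rw [← sum_subset hsub fun j hjn hjk => by
    rw [hA j k (by simpa using hjk), mul_zero], sum_range_succ, triangularInv,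
    Fin.sum_univ_eq_sum_range (fun i => triangularInv A i * A i k), div_mul_cancel₀ _ (hdiag k)]
  abel

end Triangular

section SL2

variable {K V : Type*} [Ring K] [AddCommGroup V] [Module K V] {Y N Nplus : Module.End K V}

theorem N_Nplus_pow_succ (hcomm : N * Nplus - Nplus * N = -Y) {v : V} (hv : N v = 0) {ℓ : ℤ}
    (hY : ∀ k : ℕ, Y ((Nplus ^ k) v) = ((2 * k - ℓ : ℤ) : K) • (Nplus ^ k) v) (k : ℕ) :
    N ((Nplus ^ (k + 1)) v) = (((k + 1) * (ℓ - k) : ℤ) : K) • (Nplus ^ k) v := by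
  have hNNplus : ∀ w, N (Nplus w) = Nplus (N w) - Y w := fun w => by
    have h := LinearMap.congr_fun hcomm w
    simp only [LinearMap.sub_apply, Module.End.mul_apply, LinearMap.neg_apply] at h
    rw [sub_eq_add_neg, ← h]
    abel
  induction k with
  | zero =>
    have h0 := hY 0
    simp only [pow_zero, Module.End.one_apply] at h0
    simp [hNNplus, hv, h0]
  | succ k ih =>
    rw [pow_succ', Module.End.mul_apply, hNNplus, ih, map_smul, ← Module.End.mul_apply, ← pow_succ',
      hY, ← sub_smul, ← Int.cast_sub]
    congr 2
    push_cast
    ring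

theorem N_pow_Nplus_pow (hcomm : N * Nplus - Nplus * N = -Y) {v : V} (hv : N v = 0) {ℓ : ℤ}
    (hY : ∀ k : ℕ, Y ((Nplus ^ k) v) = ((2 * k - ℓ : ℤ) : K) • (Nplus ^ k) v) (a b : ℕ) :
    (N ^ a) ((Nplus ^ b) v) = (loweringCoeff a b ℓ : K) • (Nplus ^ (b - a)) v := by
  induction a with
  | zero => simp [loweringCoeff]
  | succ a ih =>
    rw [pow_succ', Module.End.mul_apply, ih, map_smul]
    rcases lt_or_ge a b with hab | hba
    · obtain ⟨k, hk⟩ : ∃ k, b - a = k + 1 := ⟨b - a - 1, by omega⟩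
      rw [hk, N_Nplus_pow_succ hcomm hv hY, smul_smul, ← Int.cast_mul, loweringCoeff_succ,
        show b - (a + 1) = k by omega]
      congr 3
      rw [show (b : ℤ) = a + k + 1 by omega]
      ring
    · rw [Nat.sub_eq_zero_of_le hba, pow_zero, Module.End.one_apply, hv, smul_zero,
        loweringCoeff_eq_zero_of_lt (Nat.lt_succ_of_le hba), Int.cast_zero, zero_smul]

theorem Nplus_pow_N_pow_Nplus_pow (hcomm : N * Nplus - Nplus * N = -Y) {v : V} (hv : N v = 0)
    {ℓ : ℤ} (hY : ∀ k : ℕ, Y ((Nplus ^ k) v) = ((2 * k - ℓ : ℤ) : K) • (Nplus ^ k) v)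
    (a b j : ℕ) :
    (Nplus ^ j) ((N ^ (b + j)) ((Nplus ^ a) v)) =
      (loweringCoeff (b + j) a ℓ : K) • (Nplus ^ (a - b)) v := by
  rw [N_pow_Nplus_pow hcomm hv hY, map_smul]
  rcases le_or_gt (b + j) a with h | h
  · rw [← Module.End.mul_apply, ← pow_add, show j + (a - (b + j)) = a - b by omega]
  · rw [loweringCoeff_eq_zero_of_lt h, Int.cast_zero, zero_smul, zero_smul]

end SL2

def primitiveCoeff (L : ℤ) (b : ℕ) : ℕ → ℚ :=
  triangularInv fun j k => (loweringCoeff (b + j) (b + k) (L + 2 * k) : ℚ)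

theorem sum_primitiveCoeff_mul_loweringCoeff {L : ℤ} {a b n : ℕ} (hbL : b ≤ L) (ha : a < n) :
    ∑ j ∈ range n, primitiveCoeff L b j * loweringCoeff (b + j) a (L + 2 * a - 2 * b) =
      if a = b then 1 else 0 := by
  rcases lt_or_ge a b with hab | hba
  · rw [if_neg hab.ne]
    exact sum_eq_zero fun j _ => by
      rw [loweringCoeff_eq_zero_of_lt (by omega), Int.cast_zero, mul_zero]
  · obtain ⟨k, rfl⟩ := Nat.exists_eq_add_of_le hba
    rw [show L + 2 * (b + k : ℕ) - 2 * b = L + 2 * k by push_cast; ring]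
    have hupper : ∀ j k, k < j → (loweringCoeff (b + j) (b + k) (L + 2 * k) : ℚ) = 0 :=
      fun j k h => by rw [loweringCoeff_eq_zero_of_lt (by omega), Int.cast_zero]
    have hdiag : ∀ k, (loweringCoeff (b + k) (b + k) (L + 2 * k) : ℚ) ≠ 0 :=
      fun k => Int.cast_ne_zero.mpr (loweringCoeff_pos le_rfl (by omega)).ne'
    simpa [primitiveCoeff] using sum_triangularInv_mul hupper hdiag (show k < n by omega)

theorem sum_primitiveCoeff_smul {K V : Type*} [DivisionRing K] [CharZero K] [AddCommGroup V]
    [Module K V] {Y N Nplus : Module.End K V} (hcomm : N * Nplus - Nplus * N = -Y) {w : ℕ → V}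
    (hw : ∀ a, N (w a) = 0) {L : ℤ} {b n : ℕ}
    (hY : ∀ a k : ℕ, Y ((Nplus ^ k) (w a)) =
      ((2 * k - (L + 2 * a - 2 * b) : ℤ) : K) • (Nplus ^ k) (w a))
    (hbL : b ≤ L) (hbn : b < n) :
    ∑ᶠ j, (primitiveCoeff L b j : K) •
        (Nplus ^ j) ((N ^ (b + j)) (∑ a ∈ range n, (Nplus ^ a) (w a))) = w b := by
  have hterm : ∀ j, (primitiveCoeff L b j : K) • (Nplus ^ j) ((N ^ (b + j))
      (∑ a ∈ range n, (Nplus ^ a) (w a))) = ∑ a ∈ range n,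
        ((primitiveCoeff L b j * loweringCoeff (b + j) a (L + 2 * a - 2 * b) : ℚ) : K) •
          (Nplus ^ (a - b)) (w a) := fun j => by
    simp only [map_sum, Nplus_pow_N_pow_Nplus_pow hcomm (hw _) (hY _), smul_sum, smul_smul]
    push_cast
    rfl
  rw [finsum_congr hterm, finsum_eq_sum_of_support_subset (s := range n) _ ?_, sum_comm]
  · have hcoeff : ∀ a ∈ range n, ∑ j ∈ range n,
        ((primitiveCoeff L b j * loweringCoeff (b + j) a (L + 2 * a - 2 * b) : ℚ) : K) •
          (Nplus ^ (a - b)) (w a) = if a = b then w a else 0 := fun a ha => by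
      rw [← sum_smul, ← Rat.cast_sum, sum_primitiveCoeff_mul_loweringCoeff hbL (mem_range.mp ha)]
      split_ifs with hab <;> simp [hab]
    rw [sum_congr rfl hcoeff, sum_ite_eq', if_pos (mem_range.mpr hbn)]
  · intro j hj
    by_contra hjn
    refine hj (sum_eq_zero fun a ha => ?_)
    rw [mem_range] at ha
    rw [coe_range, Set.mem_Iio] at hjn
    rw [loweringCoeff_eq_zero_of_lt (by omega)]
    simp

section Bigraded

variable {K V : Type*} [Ring K] [AddCommGroup V] [Module K V] {I : ℤ × ℤ → Submodule K V}
  {Y N Nplus : Module.End K V}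

theorem Nplus_pow_mem (hNplus : ∀ p q : ℤ, ∀ v ∈ I (p, q), Nplus v ∈ I (p + 1, q + 1)) (k : ℕ)
    {p q : ℤ} {v : V} (hv : v ∈ I (p, q)) : (Nplus ^ k) v ∈ I (p + k, q + k) := by
  induction k with
  | zero => simpa using hv
  | succ k ih =>
    rw [pow_succ', Module.End.mul_apply]
    push_cast
    simpa only [add_assoc] using hNplus _ _ _ ih

theorem Y_Nplus_pow_of_mem {m : ℤ} (hY : ∀ p q : ℤ, ∀ v ∈ I (p, q), Y v = ((p + q - m : ℤ) : K) • v)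
    (hNplus : ∀ p q : ℤ, ∀ v ∈ I (p, q), Nplus v ∈ I (p + 1, q + 1)) {p q : ℤ} {v : V}
    (hv : v ∈ I (p, q)) (k : ℕ) :
    Y ((Nplus ^ k) v) = ((2 * k - (m - p - q) : ℤ) : K) • (Nplus ^ k) v := by
  rw [hY _ _ _ (Nplus_pow_mem hNplus k hv)]
  congr 2
  ring

theorem component_eq_sum_range (hI : DirectSum.IsInternal I)
    (hNplus : ∀ p q : ℤ, ∀ v ∈ I (p, q), Nplus v ∈ I (p + 1, q + 1)) {h : V} {c : ℤ → ℤ → V}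
    (hc : ∀ p q : ℤ, c p q ∈ I (p, q))
    (hcfin : (Function.support fun pq : ℤ × ℤ => c pq.1 pq.2).Finite)
    (hcsum : h = ∑ᶠ (p : ℤ) (q : ℤ), c p q) {d : ℤ → ℤ → ℕ → V}
    (hd : ∀ (p q : ℤ) (b : ℕ), d p q b ∈ I (p, q))
    (hdfin : (Function.support fun x : ℤ × ℤ × ℕ => d x.1 x.2.1 x.2.2).Finite)
    (hdsum : h = ∑ᶠ (p : ℤ) (q : ℤ) (b : ℕ), (Nplus ^ b) (d p q b)) {n : ℕ}
    (hn : ∀ (p q : ℤ) (a : ℕ), n ≤ a → d p q a = 0) (P Q : ℤ) :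
    c P Q = ∑ a ∈ range n, (Nplus ^ a) (d (P - a) (Q - a) a) := by
  set g : ℤ × ℤ × ℕ → V := fun x => (Nplus ^ x.2.2) (d x.1 x.2.1 x.2.2)
  have hgfin : (Function.support g).Finite :=
    hdfin.subset fun x hx h0 => hx (by simp [g, show d x.1 x.2.1 x.2.2 = 0 from h0])
  have hproj : ∀ x, hI.proj (P, Q) (g x) =
      if (x.1 + x.2.2, x.2.1 + x.2.2) = (P, Q) then g x else 0 :=
    fun x => hI.proj_apply_of_mem (Nplus_pow_mem hNplus _ (hd _ _ _))
  calc c P Q = hI.proj (P, Q) h := by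
        rw [hcsum, ← finsum_curry (fun pq => c pq.1 pq.2) hcfin,
          hI.proj_finsum (fun pq => hc pq.1 pq.2) hcfin]
    _ = ∑ᶠ x, hI.proj (P, Q) (g x) := by
        rw [hdsum, ← finsum_curry₃ g hgfin, map_finsum _ hgfin]
    _ = ∑ a ∈ range n, (Nplus ^ a) (d (P - a) (Q - a) a) := by
        rw [finsum_eq_sum_of_support_subset (s := (range n).image fun a : ℕ => (P - a, Q - a, a)),
          sum_image fun a _ a' _ haa' => congrArg (fun x => x.2.2) haa']
        · exact sum_congr rfl fun a _ => (hproj (P - a, Q - a, a)).trans (if_pos (by simp))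
        · rintro ⟨p, q, a⟩ hx
          rw [Function.mem_support, hproj] at hx
          obtain hpq : (p + a, q + a) = (P, Q) := by
            by_contra hne
            exact hx (if_neg hne)
          rw [if_pos hpq] at hx
          have ha : a < n := not_le.mp fun ha => hx (by simp [g, hn p q a ha])
          simp only [Prod.mk.injEq] at hpq
          simp only [coe_image, coe_range, Set.mem_image, Set.mem_Iio]
          exact ⟨a, ha, by simp [← hpq.1, ← hpq.2]⟩

end Bigraded

theorem exists_bound_of_support_finite {α β V : Type*} [Zero V] {d : α → β → ℕ → V}
    (hd : (Function.support fun x : α × β × ℕ => d x.1 x.2.1 x.2.2).Finite) (b : ℕ) :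
    ∃ n, b < n ∧ ∀ p q a, n ≤ a → d p q a = 0 := by
  obtain ⟨B, hB⟩ := (hd.image fun x => x.2.2).bddAbove
  refine ⟨B + b + 1, by omega, fun p q a ha => ?_⟩
  by_contra hne
  have : a ≤ B := hB ⟨(p, q, a), hne, rfl⟩
  omega

end PrimitiveDecomposition

open PrimitiveDecomposition

/-- There are universal rational constants `C(m,p,q,b,j)` expressing the
primitive components `h^{p,q}(b)` of any vector `h` (with respect to a bigraded structure
of weight `m` with operators `N`, `N⁺`) in terms of `(N⁺)^j N^{b+j}` applied to the
bigraded components of `h`. -/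
theorem stmt6 :
    ∃ C : ℤ → ℤ → ℤ → ℕ → ℕ → ℚ,
      ∀ (H : Type) [AddCommGroup H] [Module ℂ H] [FiniteDimensional ℂ H],
      ∀ (m : ℤ) (I : ℤ × ℤ → Submodule ℂ H),
        DirectSum.IsInternal I →
        ∀ Y N Nplus : Module.End ℂ H,
        (∀ p q : ℤ, ∀ v ∈ I (p, q), Y v = ((p + q - m : ℤ) : ℂ) • v) →
        (∀ p q : ℤ, ∀ v ∈ I (p, q), N v ∈ I (p - 1, q - 1)) →
        (∀ p q : ℤ, ∀ v ∈ I (p, q), Nplus v ∈ I (p + 1, q + 1)) →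
        N * Nplus - Nplus * N = -Y →
        ∀ (h : H)
          -- `c p q` is the component of `h` in `I^{p,q}`
          (c : ℤ → ℤ → H),
          (∀ p q : ℤ, c p q ∈ I (p, q)) →
          (Function.support fun pq : ℤ × ℤ => c pq.1 pq.2).Finite →
          h = ∑ᶠ (p : ℤ) (q : ℤ), c p q →
        ∀ d : ℤ → ℤ → ℕ → H,
          -- `d` is a primitive decomposition of `h`
          (∀ (p q : ℤ) (b : ℕ), d p q b ∈ I (p, q)) →
          (∀ (p q : ℤ) (b : ℕ), N (d p q b) = 0) →
          (∀ (p q : ℤ) (b : ℕ), m - p - q < (b : ℤ) → d p q b = 0) →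
          (Function.support fun x : ℤ × ℤ × ℕ => d x.1 x.2.1 x.2.2).Finite →
          h = ∑ᶠ (p : ℤ) (q : ℤ) (b : ℕ), (Nplus ^ b) (d p q b) →
        ∀ (p q : ℤ) (b : ℕ), (b : ℤ) ≤ m - p - q →
          d p q b = ∑ᶠ j : ℕ,
            ((C m p q b j : ℂ)) • (Nplus ^ j) ((N ^ (b + j)) (c (p + b) (q + b))) := by
  refine ⟨fun m p q b j => primitiveCoeff (m - p - q) b j, ?_⟩
  intro H _ _ _ m I hI Y N Nplus hY _ hNplus hcomm h c hc hcfin hcsum d hd hprim _ hdfin hdsum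
    p q b hb
  obtain ⟨n, hbn, hn⟩ := exists_bound_of_support_finite hdfin b
  rw [component_eq_sum_range hI hNplus hc hcfin hcsum hd hdfin hdsum hn]
  have hweight : ∀ a k : ℕ, Y ((Nplus ^ k) (d (p + b - a) (q + b - a) a)) =
      ((2 * k - (m - p - q + 2 * a - 2 * b) : ℤ) : ℂ) • (Nplus ^ k) (d (p + b - a) (q + b - a) a) :=
    fun a k => by
      rw [Y_Nplus_pow_of_mem hY hNplus (hd _ _ _)]
      congr 3
      ring
  simpa using (sum_primitiveCoeff_smul hcomm (fun a => hprim _ _ _) hweight hb hbn).symm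
end

section
/- Fix in addition a norm on H and equip End(H) with the operator norm. Then there exist a constant C > 0 and a natural number d, depending only on H together with its bigrading and norm (but not on the operators N, N⁺), such that for every choice of N, N⁺ as in the context, every h ∈ H, and every primitive decomposition (h^{p,q}(b)) of h: max_{p,q,b} ‖h^{p,q}(b)‖ ≤ C · max(1, ‖N⁺‖)^d · max_{k ≥ 0} ‖N^k h‖ (the last maximum is finite since N is nilpotent). -/
/-- Coefficient appearing in `sl₂` computations. -/
def sl2c (k b : ℕ) (l : ℤ) : ℤ := ∏ i ∈ Finset.range k, (((b : ℤ) - i) * (l - b + 1 + i))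

lemma sl2c_zero (b : ℕ) (l : ℤ) : sl2c 0 b l = 1 := by simp [sl2c]

lemma sl2c_eq_zero {k b : ℕ} (hbk : b < k) (l : ℤ) : sl2c k b l = 0 :=
  Finset.prod_eq_zero (Finset.mem_range.2 hbk) (by simp)

lemma sl2c_succ (k b : ℕ) (l : ℤ) :
    sl2c (k+1) (b+1) l = ((b : ℤ) + 1) * (l - b) * sl2c k b l := by
  rw [sl2c, Finset.prod_range_succ', sl2c, mul_comm]
  congr 1
  · push_cast; ring
  · exact Finset.prod_congr rfl fun i _ => by push_cast; ring

lemma sl2c_one_le {b : ℕ} {l : ℤ} (hbl : (b : ℤ) ≤ l) : 1 ≤ sl2c b b l := by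
  rw [sl2c]
  refine Finset.prod_induction _ (fun x => 1 ≤ x) (fun a c ha hc => by nlinarith) le_rfl ?_
  intro i hi
  rw [Finset.mem_range] at hi
  have h1 : 1 ≤ (b : ℤ) - i := by omega
  have h2 : 1 ≤ l - b + 1 + i := by omega
  nlinarith

lemma norm_intCast_complex (c : ℤ) : ‖((c:ℤ):ℂ)‖ = (c.natAbs : ℝ) := by
  rw [Complex.norm_intCast, Nat.cast_natAbs, Int.cast_abs]

set_option maxHeartbeats 1000000 in
/-- Normed version of the primitive-decomposition bound: there are `C > 0`
and `d ∈ ℕ`, depending only on the bigraded normed space `(H, I, m, Y)` (not on `N`, `N⁺`),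
such that all primitive components of any `h` satisfy
`‖h^{p,q}(b)‖ ≤ C · max(1,‖N⁺‖)^d · max_{k≥0} ‖N^k h‖`. -/
theorem stmt7 {H : Type*} [NormedAddCommGroup H] [NormedSpace ℂ H] [FiniteDimensional ℂ H]
    (m : ℤ) (I : ℤ × ℤ → Submodule ℂ H) (hI : DirectSum.IsInternal I)
    (Y : H →L[ℂ] H)
    (hY : ∀ p q : ℤ, ∀ v ∈ I (p, q), Y v = ((p + q - m : ℤ) : ℂ) • v) :
    ∃ C : ℝ, 0 < C ∧ ∃ d : ℕ,
      ∀ N Nplus : H →L[ℂ] H,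
        (∀ p q : ℤ, ∀ v ∈ I (p, q), N v ∈ I (p - 1, q - 1)) →
        (∀ p q : ℤ, ∀ v ∈ I (p, q), Nplus v ∈ I (p + 1, q + 1)) →
        (∀ v : H, N (Nplus v) - Nplus (N v) = -(Y v)) →
        ∀ (h : H) (dec : ℤ → ℤ → ℕ → H),
          -- `dec` is a primitive decomposition of `h`
          (∀ (p q : ℤ) (b : ℕ), dec p q b ∈ I (p, q)) →
          (∀ (p q : ℤ) (b : ℕ), N (dec p q b) = 0) →
          (∀ (p q : ℤ) (b : ℕ), m - p - q < (b : ℤ) → dec p q b = 0) →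
          (Function.support fun x : ℤ × ℤ × ℕ => dec x.1 x.2.1 x.2.2).Finite →
          h = ∑ᶠ (p : ℤ) (q : ℤ) (b : ℕ), (Nplus ^ b) (dec p q b) →
        ∀ (p q : ℤ) (b : ℕ),
          ‖dec p q b‖ ≤ C * max 1 ‖Nplus‖ ^ d * ⨆ k : ℕ, ‖(N ^ k) h‖ := by
  classical
  -- ### Setup depending only on `(H, I, m)`
  have hfinS : {j : ℤ × ℤ | I j ≠ ⊥}.Finite :=
    WellFoundedGT.finite_ne_bot_of_iSupIndep hI.submodule_iSupIndep
  set S : Finset (ℤ × ℤ) := hfinS.toFinset with hS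
  set e := LinearEquiv.ofBijective (DirectSum.coeLinearMap I) hI with he
  set π : ℤ × ℤ → H →L[ℂ] H := fun j =>
    LinearMap.toContinuousLinearMap
      ((I j).subtype ∘ₗ (DirectSum.component ℂ (ℤ × ℤ) (fun i => I i) j) ∘ₗ e.symm.toLinearMap)
    with hπ
  have hπ_mem : ∀ j x, π j x ∈ I j := by
    intro j x
    simp [hπ]
  have hπ_same : ∀ j (x : H), x ∈ I j → π j x = x := by
    intro j x hx
    simp only [hπ, LinearMap.coe_toContinuousLinearMap', LinearMap.coe_comp, Function.comp_apply,
      LinearEquiv.coe_coe]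
    rw [← DirectSum.apply_eq_component, hI.ofBijective_coeLinearMap_of_mem hx]
    rfl
  have hπ_ne : ∀ j j' (x : H), x ∈ I j' → j' ≠ j → π j x = 0 := by
    intro j j' x hx hne
    simp only [hπ, LinearMap.coe_toContinuousLinearMap', LinearMap.coe_comp, Function.comp_apply,
      LinearEquiv.coe_coe]
    rw [← DirectSum.apply_eq_component, hI.ofBijective_coeLinearMap_of_mem_ne hne hx]
    rfl
  set C₀ : ℝ := 1 + ∑ j ∈ S, ‖π j‖ with hC₀
  have hC₀_one : 1 ≤ C₀ := by
    have : 0 ≤ ∑ j ∈ S, ‖π j‖ := Finset.sum_nonneg fun j _ => norm_nonneg _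
    linarith
  have hC₀_pos : 0 < C₀ := by linarith
  have hπ_bound : ∀ j x, ‖π j x‖ ≤ C₀ * ‖x‖ := by
    intro j x
    by_cases hj : I j = ⊥
    · have h0 : π j x = 0 := by
        have := hπ_mem j x
        rw [hj] at this
        simpa using this
      rw [h0, norm_zero]
      positivity
    · have hjS : j ∈ S := by simp [hS, Set.Finite.mem_toFinset, hj]
      calc ‖π j x‖ ≤ ‖π j‖ * ‖x‖ := (π j).le_opNorm x
        _ ≤ C₀ * ‖x‖ := by
            apply mul_le_mul_of_nonneg_right _ (norm_nonneg x)
            rw [hC₀]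
            have h1 : ‖π j‖ ≤ ∑ j ∈ S, ‖π j‖ :=
              Finset.single_le_sum (fun i _ => norm_nonneg (π i)) hjS
            linarith
  -- the uniform bound on the relevant weights
  set B : ℕ := S.sup (fun j => (m - j.1 - j.2).toNat) with hB
  -- uniform bound on the coefficients
  set Anat : ℕ := ((S ×ˢ Finset.range (B+1) ×ˢ Finset.range (B+1)).sup
      fun z => (sl2c z.2.1 z.2.2 (m - z.1.1 - z.1.2)).natAbs) with hAnat
  set A : ℝ := (Anat : ℝ) with hA
  have hA0 : 0 ≤ A := Nat.cast_nonneg _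
  -- the reference finite index set
  set W : Finset (ℤ × ℤ × ℕ) := (S ×ˢ Finset.range (B+1)).image
      (fun y => (y.1.1, y.1.2, y.2)) with hW
  set Ncard : ℝ := (W.card : ℝ) with hNcard
  have hNcard0 : 0 ≤ Ncard := Nat.cast_nonneg _
  have hCAN : (0:ℝ) ≤ C₀ * A * Ncard := mul_nonneg (mul_nonneg hC₀_pos.le hA0) hNcard0
  have hCpos : (0:ℝ) < C₀ * (1 + C₀ * A * Ncard) ^ B :=
    mul_pos hC₀_pos (pow_pos (by linarith) B)
  refine ⟨C₀ * (1 + C₀ * A * Ncard) ^ B, hCpos, B * B, ?_⟩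
  intro N Nplus hN hNp hcomm h dec hdecmem hdecprim hdecvan hfin hsum
  set M : ℝ := max 1 ‖Nplus‖ with hM
  have hM1 : (1:ℝ) ≤ M := le_max_left _ _
  have hM0 : (0:ℝ) < M := by linarith
  -- ### sl₂ computations
  have hpow_mem : ∀ (b : ℕ) (p q : ℤ) (v : H), v ∈ I (p, q) →
      (Nplus ^ b) v ∈ I (p + b, q + b) := by
    intro b
    induction b with
    | zero => intro p q v hv; simpa using hv
    | succ b ih =>
      intro p q v hv
      have h1 : (Nplus ^ (b+1)) v = Nplus ((Nplus ^ b) v) := by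
        rw [pow_succ']; rfl
      rw [h1]
      have h2 := hNp (p + b) (q + b) _ (ih p q v hv)
      convert h2 using 2 <;> push_cast <;> ring
  have key1 : ∀ (p q : ℤ) (v : H), v ∈ I (p, q) → N v = 0 → ∀ b : ℕ,
      N ((Nplus ^ (b+1)) v) = ((((b : ℤ) + 1) * (m - p - q - b) : ℤ) : ℂ) • ((Nplus ^ b) v) := by
    intro p q v hv hNv b
    induction b with
    | zero =>
      have h1 : (Nplus ^ 1) v = Nplus v := by simp
      rw [h1]
      have h2 : N (Nplus v) = Nplus (N v) - Y v := by
        have := hcomm v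
        linear_combination (norm := module) this
      rw [h2, hNv, map_zero, hY p q v hv]
      simp only [pow_zero, ContinuousLinearMap.one_apply]
      push_cast
      module
    | succ b ih =>
      have h1 : (Nplus ^ (b+2)) v = Nplus ((Nplus ^ (b+1)) v) := by
        rw [pow_succ']; rfl
      rw [h1]
      set w := (Nplus ^ (b+1)) v with hw
      have h2 : N (Nplus w) = Nplus (N w) - Y w := by
        have := hcomm w
        linear_combination (norm := module) this
      have hwmem : w ∈ I (p + (b+1 : ℕ), q + (b+1 : ℕ)) := hpow_mem (b+1) p q v hv
      have hYw : Y w = (((p + (b+1 : ℕ)) + (q + (b+1 : ℕ)) - m : ℤ) : ℂ) • w :=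
        hY _ _ w hwmem
      rw [h2, ih, map_smul, hYw]
      have h3 : Nplus ((Nplus ^ b) v) = (Nplus ^ (b+1)) v := by
        rw [pow_succ']; rfl
      rw [h3, ← hw]
      have hcast : (((b:ℕ)+1 : ℕ) : ℤ) = (b : ℤ) + 1 := by push_cast; ring
      rw [hcast]
      have harith : ((((b:ℤ) + 1) * (m - p - q - b) : ℤ) : ℂ)
            - (((p + ((b:ℤ)+1)) + (q + ((b:ℤ)+1)) - m : ℤ) : ℂ)
          = ((((b:ℤ) + 1 + 1) * (m - p - q - ((b:ℤ)+1)) : ℤ) : ℂ) := by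
        push_cast; ring
      rw [← sub_smul, harith]
  have key2 : ∀ (p q : ℤ) (v : H), v ∈ I (p, q) → N v = 0 → ∀ (k b : ℕ),
      (N ^ k) ((Nplus ^ b) v) = ((sl2c k b (m - p - q) : ℤ) : ℂ) • ((Nplus ^ (b - k)) v) := by
    intro p q v hv hNv k
    induction k with
    | zero => intro b; simp [sl2c_zero]
    | succ k ih =>
      intro b
      have h1 : (N ^ (k+1)) ((Nplus ^ b) v) = (N ^ k) (N ((Nplus ^ b) v)) := by
        rw [pow_succ]; rfl
      rw [h1]
      match b with
      | 0 =>
        simp only [pow_zero, ContinuousLinearMap.one_apply]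
        rw [hNv, map_zero, sl2c_eq_zero (Nat.succ_pos k)]
        simp
      | b + 1 =>
        rw [key1 p q v hv hNv b, map_smul, ih b, sl2c_succ, smul_smul]
        have hsub : b + 1 - (k + 1) = b - k := by omega
        rw [hsub]
        congr 1
        push_cast
        ring
  -- ### the decomposition as a finite sum
  set T : Finset (ℤ × ℤ × ℕ) := hfin.toFinset with hT
  set P : Finset ℤ := T.image Prod.fst with hP
  set Q : Finset ℤ := T.image (fun x => x.2.1) with hQ
  set Bs : Finset ℕ := T.image (fun x => x.2.2) with hBs
  have hTmem : ∀ p q b, dec p q b ≠ 0 → (p, q, b) ∈ T := by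
    intro p q b hne
    rw [hT, Set.Finite.mem_toFinset]
    exact hne
  have hsum2 : h = ∑ p ∈ P, ∑ q ∈ Q, ∑ b ∈ Bs, (Nplus ^ b) (dec p q b) := by
    rw [hsum]
    rw [finsum_eq_sum_of_support_subset _ (s := P) ?_]
    · apply Finset.sum_congr rfl
      intro p _
      rw [finsum_eq_sum_of_support_subset _ (s := Q) ?_]
      · apply Finset.sum_congr rfl
        intro q _
        rw [finsum_eq_sum_of_support_subset _ (s := Bs) ?_]
        intro b hb
        have hne : dec p q b ≠ 0 := fun h0 => hb (by simp [h0])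
        exact Finset.mem_coe.2 (Finset.mem_image.2 ⟨(p,q,b), hTmem p q b hne, rfl⟩)
      · intro q hq
        have hex : ∃ b, dec p q b ≠ 0 := by
          by_contra hall
          push_neg at hall
          exact hq (finsum_eq_zero_of_forall_eq_zero fun b => by rw [hall b, map_zero])
        obtain ⟨b, hb⟩ := hex
        exact Finset.mem_coe.2 (Finset.mem_image.2 ⟨(p,q,b), hTmem p q b hb, rfl⟩)
    · intro p hp
      have hex : ∃ q b, dec p q b ≠ 0 := by
        by_contra hall
        push_neg at hall
        exact hp (finsum_eq_zero_of_forall_eq_zero fun q =>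
          finsum_eq_zero_of_forall_eq_zero fun b => by rw [hall q b, map_zero])
      obtain ⟨q, b, hb⟩ := hex
      exact Finset.mem_coe.2 (Finset.mem_image.2 ⟨(p,q,b), hTmem p q b hb, rfl⟩)
  set U : Finset (ℤ × ℤ × ℕ) := P ×ˢ Q ×ˢ Bs with hU
  have hsum3 : h = ∑ x ∈ U, (Nplus ^ x.2.2) (dec x.1 x.2.1 x.2.2) := by
    rw [hsum2, hU, Finset.sum_product]
    exact Finset.sum_congr rfl fun p _ => by rw [Finset.sum_product]
  have hTU : T ⊆ U := by
    intro x hx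
    rw [hU, Finset.mem_product, Finset.mem_product]
    exact ⟨Finset.mem_image.2 ⟨x, hx, rfl⟩, Finset.mem_image.2 ⟨x, hx, rfl⟩,
      Finset.mem_image.2 ⟨x, hx, rfl⟩⟩
  -- consequences of `dec p q b ≠ 0`
  have hdec_ne : ∀ (p q : ℤ) (b : ℕ), dec p q b ≠ 0 →
      (p, q) ∈ S ∧ b ≤ B ∧ (b : ℤ) ≤ m - p - q := by
    intro p q b hne
    have hl : (b : ℤ) ≤ m - p - q := by
      by_contra hc
      exact hne (hdecvan p q b (by omega))
    have hbot : I (p, q) ≠ ⊥ := by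
      intro hbot
      apply hne
      have := hdecmem p q b
      rw [hbot] at this
      simpa using this
    have hpqS : (p, q) ∈ S := by simp [hS, Set.Finite.mem_toFinset, hbot]
    refine ⟨hpqS, ?_, hl⟩
    have h1 : (m - p - q).toNat ≤ B := Finset.le_sup (f := fun j => (m - j.1 - j.2).toNat) hpqS
    omega
  -- `N^k h` as a finite sum
  set g : ℕ → ℤ × ℤ × ℕ → H := fun k x =>
    ((sl2c k x.2.2 (m - x.1 - x.2.1) : ℤ) : ℂ) • (Nplus ^ (x.2.2 - k)) (dec x.1 x.2.1 x.2.2)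
    with hg
  have hNk : ∀ k, (N ^ k) h = ∑ x ∈ U, g k x := by
    intro k
    rw [hsum3, map_sum]
    exact Finset.sum_congr rfl fun x _ =>
      key2 x.1 x.2.1 _ (hdecmem x.1 x.2.1 x.2.2) (hdecprim x.1 x.2.1 x.2.2) k x.2.2
  have hNk_zero : ∀ k, B < k → (N ^ k) h = 0 := by
    intro k hk
    rw [hNk k]
    apply Finset.sum_eq_zero
    intro x _
    by_cases hd : dec x.1 x.2.1 x.2.2 = 0
    · simp [hg, hd]
    · obtain ⟨-, hbB2, -⟩ := hdec_ne _ _ _ hd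
      have hlt2 : x.2.2 < k := by omega
      have h0 : sl2c k x.2.2 (m - x.1 - x.2.1) = 0 := sl2c_eq_zero hlt2 _
      simp [hg, h0]
  -- the sup is a genuine bound
  have Kbdd : BddAbove (Set.range fun k : ℕ => ‖(N ^ k) h‖) := by
    refine ⟨∑ k ∈ Finset.range (B+1), ‖(N ^ k) h‖, ?_⟩
    rintro y ⟨k, rfl⟩
    show ‖(N ^ k) h‖ ≤ ∑ k ∈ Finset.range (B+1), ‖(N ^ k) h‖
    by_cases hk : k ≤ B
    · have hkmem : k ∈ Finset.range (B+1) := Finset.mem_range.2 (by omega)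
      exact Finset.single_le_sum (f := fun k => ‖(N ^ k) h‖)
        (fun i _ => norm_nonneg _) hkmem
    · rw [hNk_zero k (by omega), norm_zero]
      exact Finset.sum_nonneg fun i _ => norm_nonneg _
  set K : ℝ := ⨆ k : ℕ, ‖(N ^ k) h‖ with hK
  have hK_le : ∀ k, ‖(N ^ k) h‖ ≤ K := fun k => le_ciSup Kbdd k
  have hK0 : 0 ≤ K := (norm_nonneg _).trans (hK_le 0)
  -- ### the core recursion inequality
  have core : ∀ (D : ℝ), 0 ≤ D → ∀ (p q : ℤ) (b : ℕ),
      (∀ (p' q' : ℤ) (b' : ℕ), b < b' → ‖dec p' q' b'‖ ≤ D) →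
      ‖dec p q b‖ ≤ C₀ * K + C₀ * A * M ^ B * Ncard * D := by
    intro D hD p q b hind
    have hRHS0 : 0 ≤ C₀ * A * M ^ B * Ncard * D :=
      mul_nonneg (mul_nonneg (mul_nonneg (mul_nonneg hC₀_pos.le hA0) (pow_nonneg hM0.le B)) hNcard0) hD
    have htermB : 0 ≤ C₀ * A * M ^ B * D :=
      mul_nonneg (mul_nonneg (mul_nonneg hC₀_pos.le hA0) (pow_nonneg hM0.le B)) hD
    by_cases hd0 : dec p q b = 0
    · rw [hd0, norm_zero]
      have : 0 ≤ C₀ * K := mul_nonneg hC₀_pos.le hK0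
      linarith
    obtain ⟨hpqS, hbB, hbl⟩ := hdec_ne p q b hd0
    have hyU : (p, q, b) ∈ U := hTU (hTmem p q b hd0)
    have hsplit : (π (p,q)) ((N ^ b) h)
        = (π (p,q)) (g b (p,q,b)) + ∑ x ∈ U.erase (p,q,b), (π (p,q)) (g b x) := by
      rw [hNk b, map_sum, ← Finset.add_sum_erase _ _ hyU]
    have hgy : (π (p,q)) (g b (p,q,b)) = ((sl2c b b (m - p - q) : ℤ) : ℂ) • dec p q b := by
      show (π (p,q)) (((sl2c b b (m - p - q) : ℤ) : ℂ) • (Nplus ^ (b - b)) (dec p q b)) = _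
      rw [Nat.sub_self, pow_zero, map_smul]
      congr 1
      exact hπ_same _ _ (hdecmem p q b)
    have hiso : ((sl2c b b (m - p - q) : ℤ) : ℂ) • dec p q b
        = (π (p,q)) ((N ^ b) h) - ∑ x ∈ U.erase (p,q,b), (π (p,q)) (g b x) := by
      rw [hsplit, hgy, add_sub_cancel_right]
    have hnorm1 : ‖dec p q b‖ ≤ ‖((sl2c b b (m - p - q) : ℤ) : ℂ) • dec p q b‖ := by
      rw [norm_smul]
      have h1 : (1:ℝ) ≤ ‖((sl2c b b (m - p - q) : ℤ) : ℂ)‖ := by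
        have hc := sl2c_one_le hbl
        rw [norm_intCast_complex]
        have : (1:ℕ) ≤ (sl2c b b (m - p - q)).natAbs := by
          rcases Int.natAbs_eq (sl2c b b (m - p - q)) with heq | heq <;> omega
        exact_mod_cast this
      nlinarith [norm_nonneg (dec p q b)]
    -- bound the error sum
    have hsum_bound : ∑ x ∈ U.erase (p,q,b), ‖(π (p,q)) (g b x)‖
        ≤ C₀ * A * M ^ B * Ncard * D := by
      have hfil : ∑ x ∈ U.erase (p,q,b), ‖(π (p,q)) (g b x)‖
          = ∑ x ∈ (U.erase (p,q,b)).filter (· ∈ W), ‖(π (p,q)) (g b x)‖ := by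
        symm
        apply Finset.sum_subset (Finset.filter_subset _ _)
        intro x hxE hxF
        have hxW : x ∉ W := fun hw => hxF (Finset.mem_filter.2 ⟨hxE, hw⟩)
        by_cases hdx : dec x.1 x.2.1 x.2.2 = 0
        · simp [hg, hdx]
        · exfalso
          apply hxW
          obtain ⟨hxS, hxB, _⟩ := hdec_ne _ _ _ hdx
          refine Finset.mem_image.2 ⟨((x.1, x.2.1), x.2.2),
            Finset.mem_product.2 ⟨hxS, Finset.mem_range.2 ?_⟩, rfl⟩
          show x.2.2 < B + 1
          omega
      rw [hfil]
      have hterm : ∀ x ∈ (U.erase (p,q,b)).filter (· ∈ W),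
          ‖(π (p,q)) (g b x)‖ ≤ C₀ * A * M ^ B * D := by
        intro x hx
        obtain ⟨hxE, hxW⟩ := Finset.mem_filter.1 hx
        by_cases hdx : dec x.1 x.2.1 x.2.2 = 0
        · simp only [hg, hdx, map_zero, smul_zero, norm_zero]
          exact htermB
        obtain ⟨hxS, hxB, hxl⟩ := hdec_ne _ _ _ hdx
        rcases lt_trichotomy x.2.2 b with hlt | heq | hgt
        · have h0 : g b x = 0 := by
            simp [hg, sl2c_eq_zero hlt]
          rw [h0, map_zero, norm_zero]
          exact htermB
        · have hne : (x.1, x.2.1) ≠ (p, q) := by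
            intro hc
            apply Finset.ne_of_mem_erase hxE
            have h1 : x.1 = p := congrArg Prod.fst hc
            have h2 : x.2.1 = q := congrArg Prod.snd hc
            exact Prod.ext h1 (Prod.ext h2 heq)
          have hmem : g b x ∈ I (x.1, x.2.1) := by
            show ((sl2c b x.2.2 (m - x.1 - x.2.1) : ℤ) : ℂ)
                • (Nplus ^ (x.2.2 - b)) (dec x.1 x.2.1 x.2.2) ∈ _
            rw [heq, Nat.sub_self, pow_zero]
            exact Submodule.smul_mem _ _ (by simpa using hdecmem x.1 x.2.1 b)
          rw [hπ_ne _ _ _ hmem hne, norm_zero]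
          exact htermB
        · -- the main case `b < x.2.2 ≤ B`
          have hAle : ‖((sl2c b x.2.2 (m - x.1 - x.2.1) : ℤ) : ℂ)‖ ≤ A := by
            rw [norm_intCast_complex, hA]
            have hzmem : ((x.1, x.2.1), b, x.2.2)
                ∈ S ×ˢ Finset.range (B+1) ×ˢ Finset.range (B+1) := by
              refine Finset.mem_product.2 ⟨hxS, Finset.mem_product.2
                ⟨Finset.mem_range.2 ?_, Finset.mem_range.2 ?_⟩⟩
              · show b < B + 1
                omega
              · show x.2.2 < B + 1
                omega
            have := Finset.le_sup (f := fun z : (ℤ × ℤ) × ℕ × ℕ =>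
              (sl2c z.2.1 z.2.2 (m - z.1.1 - z.1.2)).natAbs) hzmem
            exact_mod_cast this
          have hNple : ‖(Nplus ^ (x.2.2 - b)) (dec x.1 x.2.1 x.2.2)‖ ≤ M ^ B * D := by
            calc ‖(Nplus ^ (x.2.2 - b)) (dec x.1 x.2.1 x.2.2)‖
                ≤ ‖Nplus ^ (x.2.2 - b)‖ * ‖dec x.1 x.2.1 x.2.2‖ :=
                  ContinuousLinearMap.le_opNorm _ _
              _ ≤ ‖Nplus‖ ^ (x.2.2 - b) * ‖dec x.1 x.2.1 x.2.2‖ :=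
                  mul_le_mul_of_nonneg_right (norm_pow_le' Nplus (by omega))
                    (norm_nonneg _)
              _ ≤ M ^ (x.2.2 - b) * D := by
                  apply mul_le_mul
                  · exact pow_le_pow_left₀ (norm_nonneg _) (le_max_right _ _) _
                  · exact hind _ _ _ hgt
                  · exact norm_nonneg _
                  · exact pow_nonneg hM0.le _
              _ ≤ M ^ B * D := by
                  apply mul_le_mul_of_nonneg_right _ hD
                  exact pow_le_pow_right₀ hM1 (by omega)
          calc ‖(π (p,q)) (g b x)‖ ≤ C₀ * ‖g b x‖ := hπ_bound _ _
            _ = C₀ * (‖((sl2c b x.2.2 (m - x.1 - x.2.1) : ℤ) : ℂ)‖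
                * ‖(Nplus ^ (x.2.2 - b)) (dec x.1 x.2.1 x.2.2)‖) := by
                rw [hg]; rw [norm_smul]
            _ ≤ C₀ * (A * (M ^ B * D)) := by
                apply mul_le_mul_of_nonneg_left _ (by linarith)
                apply mul_le_mul hAle hNple (norm_nonneg _) hA0
            _ = C₀ * A * M ^ B * D := by ring
      calc ∑ x ∈ (U.erase (p,q,b)).filter (· ∈ W), ‖(π (p,q)) (g b x)‖
          ≤ ((U.erase (p,q,b)).filter (· ∈ W)).card • (C₀ * A * M ^ B * D) :=
            Finset.sum_le_card_nsmul _ _ _ hterm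
        _ = (((U.erase (p,q,b)).filter (· ∈ W)).card : ℝ) * (C₀ * A * M ^ B * D) := by
            rw [nsmul_eq_mul]
        _ ≤ Ncard * (C₀ * A * M ^ B * D) := by
            apply mul_le_mul_of_nonneg_right _ htermB
            rw [hNcard]
            have hsub : (U.erase (p,q,b)).filter (· ∈ W) ⊆ W := fun x hx =>
              (Finset.mem_filter.1 hx).2
            exact_mod_cast Finset.card_le_card hsub
        _ = C₀ * A * M ^ B * Ncard * D := by ring
    calc ‖dec p q b‖ ≤ ‖((sl2c b b (m - p - q) : ℤ) : ℂ) • dec p q b‖ := hnorm1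
      _ = ‖(π (p,q)) ((N ^ b) h) - ∑ x ∈ U.erase (p,q,b), (π (p,q)) (g b x)‖ := by rw [hiso]
      _ ≤ ‖(π (p,q)) ((N ^ b) h)‖ + ‖∑ x ∈ U.erase (p,q,b), (π (p,q)) (g b x)‖ :=
          norm_sub_le _ _
      _ ≤ C₀ * ‖(N ^ b) h‖ + ∑ x ∈ U.erase (p,q,b), ‖(π (p,q)) (g b x)‖ :=
          add_le_add (hπ_bound _ _) (norm_sum_le _ _)
      _ ≤ C₀ * K + C₀ * A * M ^ B * Ncard * D :=
          add_le_add (mul_le_mul_of_nonneg_left (hK_le b) (by linarith)) hsum_bound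
  -- ### downward induction
  set G : ℝ := C₀ * A * M ^ B * Ncard with hG
  have hG0 : 0 ≤ G :=
    mul_nonneg (mul_nonneg (mul_nonneg hC₀_pos.le hA0) (pow_nonneg hM0.le B)) hNcard0
  have main : ∀ n : ℕ, ∀ (p q : ℤ) (b : ℕ), B ≤ b + n →
      ‖dec p q b‖ ≤ C₀ * K * (1 + G) ^ n := by
    intro n
    induction n with
    | zero =>
      intro p q b hb
      have h0 : ∀ (p' q' : ℤ) (b' : ℕ), b < b' → ‖dec p' q' b'‖ ≤ 0 := by
        intro p' q' b' hbb
        by_cases hdx : dec p' q' b' = 0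
        · rw [hdx, norm_zero]
        · obtain ⟨_, hB', _⟩ := hdec_ne _ _ _ hdx
          omega
      calc ‖dec p q b‖ ≤ C₀ * K + G * 0 := core 0 le_rfl p q b h0
        _ = C₀ * K * (1 + G) ^ 0 := by ring
    | succ n ih =>
      intro p q b hb
      have hDn : 0 ≤ C₀ * K * (1 + G) ^ n :=
        mul_nonneg (mul_nonneg hC₀_pos.le hK0) (pow_nonneg (by linarith) n)
      have hstep := core _ hDn p q b (fun p' q' b' hbb => ih p' q' b' (by omega))
      have hpow1 : (1:ℝ) ≤ (1 + G) ^ n := one_le_pow₀ (by linarith)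
      calc ‖dec p q b‖ ≤ C₀ * K + G * (C₀ * K * (1 + G) ^ n) := hstep
        _ ≤ C₀ * K * (1 + G) ^ (n + 1) := by
            have hCK : 0 ≤ C₀ * K := mul_nonneg hC₀_pos.le hK0
            have h2 : C₀ * K ≤ C₀ * K * (1 + G) ^ n :=
              le_mul_of_one_le_right hCK hpow1
            calc C₀ * K + G * (C₀ * K * (1 + G) ^ n)
                ≤ C₀ * K * (1 + G) ^ n + G * (C₀ * K * (1 + G) ^ n) := by linarith
              _ = C₀ * K * (1 + G) ^ (n + 1) := by ring
  -- ### conclusion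
  intro p q b
  have hmain := main B p q b (by omega)
  have hpowB : (1:ℝ) + G ≤ (1 + C₀ * A * Ncard) * M ^ B := by
    have h1 : (1:ℝ) ≤ M ^ B := one_le_pow₀ hM1
    have h2 : 0 ≤ C₀ * A * Ncard := hCAN
    rw [hG]
    nlinarith
  calc ‖dec p q b‖ ≤ C₀ * K * (1 + G) ^ B := hmain
    _ ≤ C₀ * K * ((1 + C₀ * A * Ncard) * M ^ B) ^ B := by
        apply mul_le_mul_of_nonneg_left _ (mul_nonneg hC₀_pos.le hK0)
        exact pow_le_pow_left₀ (by linarith) hpowB B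
    _ = C₀ * (1 + C₀ * A * Ncard) ^ B * M ^ (B * B) * K := by
        rw [mul_pow, ← pow_mul]
        ring
end

section
/- Specialize to weight m = −1, and note that N is nilpotent, so exp(−2iN) is a well-defined finite exponential sum. Let w ∈ H and let (w^{p,q}(b)) be a primitive decomposition of w (with w^{p,q}(b) taken to be 0 for indices b outside the range 0 ≤ b ≤ −1−p−q). Then the family u^{p,q}(b) := Σ_{k ≥ 0} ((−2i)^k / k!) · R(k, k+b, −1−p−q) · w^{p,q}(k+b) (a finite sum, since R(k, k+b, −1−p−q) = 0 once k+b > −1−p−q) is a primitive decomposition of exp(−2iN)·w; that is, each u^{p,q}(b) lies in I^{p,q} and satisfies N(u^{p,q}(b)) = 0, and exp(−2iN)·w = Σ_{p,q} Σ_{b=0}^{−1−p−q} (N⁺)^b u^{p,q}(b). -/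
/-- The constant `R(a,b,ℓ) = b!(ℓ+a-b)!/((ℓ-b)!(b-a)!)` for integers `0 ≤ a ≤ b ≤ ℓ`,
and `R(a,b,ℓ) = 0` otherwise. -/
noncomputable def Rconst (a b : ℕ) (ℓ : ℤ) : ℚ :=
  if a ≤ b ∧ (b : ℤ) ≤ ℓ then
    ((Nat.factorial b : ℚ) * (Nat.factorial (ℓ + a - b).toNat : ℚ)) /
      ((Nat.factorial (ℓ - b).toNat : ℚ) * (Nat.factorial (b - a) : ℚ))
  else 0


lemma Rconst_zero (n : ℕ) (ℓ : ℤ) (h : (n:ℤ) ≤ ℓ) : Rconst 0 n ℓ = 1 := by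
  rw [Rconst, if_pos ⟨Nat.zero_le n, h⟩]
  have h1 : (ℓ + (0:ℕ) - n) = ℓ - n := by push_cast; ring
  rw [h1, Nat.sub_zero, mul_comm]
  exact div_self (by positivity)

lemma Rconst_eq_zero (k n : ℕ) (ℓ : ℤ) (h : n < k) : Rconst k n ℓ = 0 :=
  if_neg (by omega)

lemma Rconst_succ (k n : ℕ) (ℓ : ℤ) (hk : k < n) (hn : (n:ℤ) ≤ ℓ) :
    Rconst (k+1) n ℓ = Rconst k n ℓ * (((n:ℚ) - k) * ((ℓ:ℚ) - n + k + 1)) := by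
  lift ℓ to ℕ using (by omega) with L
  obtain ⟨a, rfl⟩ : ∃ a, n = k + 1 + a := ⟨n - (k+1), by omega⟩
  obtain ⟨c, rfl⟩ : ∃ c, L = (k + 1 + a) + c := ⟨L - (k+1+a), by omega⟩
  rw [Rconst, if_pos ⟨by omega, hn⟩, Rconst, if_pos ⟨by omega, hn⟩]
  have h1 : ((((k+1+a)+c : ℕ):ℤ) + ((k+1:ℕ):ℤ) - ((k+1+a : ℕ):ℤ)).toNat = k + c + 1 := by omega
  have h2 : ((((k+1+a)+c : ℕ):ℤ) + ((k:ℕ):ℤ) - ((k+1+a : ℕ):ℤ)).toNat = k + c := by omega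
  have h3 : ((((k+1+a)+c : ℕ):ℤ) - ((k+1+a : ℕ):ℤ)).toNat = c := by omega
  have h4 : k + 1 + a - (k + 1) = a := by omega
  have h5 : k + 1 + a - k = a + 1 := by omega
  rw [h1, h2, h3, h4, h5]
  have e1 : Nat.factorial (k+c+1) = (k+c+1) * Nat.factorial (k+c) := Nat.factorial_succ _
  have e2 : Nat.factorial (a+1) = (a+1) * Nat.factorial a := Nat.factorial_succ _
  rw [e1, e2]
  have f1 : (Nat.factorial (k+c) : ℚ) ≠ 0 := by positivity
  have f2 : (Nat.factorial a : ℚ) ≠ 0 := by positivity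
  have f3 : (Nat.factorial c : ℚ) ≠ 0 := by positivity
  field_simp
  push_cast
  ring

section
variable {H : Type*} [AddCommGroup H] [Module ℂ H]
    (I : ℤ × ℤ → Submodule ℂ H) (Y N Nplus : Module.End ℂ H)

lemma auxMem (hNplus : ∀ p q : ℤ, ∀ v ∈ I (p, q), Nplus v ∈ I (p + 1, q + 1))
    (p q : ℤ) (v : H) (hv : v ∈ I (p, q)) :
    ∀ j : ℕ, (Nplus ^ j) v ∈ I (p + j, q + j) := by
  intro j
  induction j with
  | zero => simpa using hv
  | succ j ih =>
    have h := hNplus (p + j) (q + j) _ ih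
    rw [pow_succ', Module.End.mul_apply]
    push_cast
    rw [← add_assoc, ← add_assoc]
    exact h

lemma auxB (hY : ∀ p q : ℤ, ∀ v ∈ I (p, q), Y v = ((p + q - (-1) : ℤ) : ℂ) • v)
    (hNplus : ∀ p q : ℤ, ∀ v ∈ I (p, q), Nplus v ∈ I (p + 1, q + 1))
    (hcomm : N * Nplus - Nplus * N = -Y)
    (p q : ℤ) (v : H) (hv : v ∈ I (p, q)) (hNv : N v = 0) :
    ∀ n : ℕ, N ((Nplus ^ (n+1)) v)
      = (((((n:ℤ)+1) * ((-1 - p - q) - n)) : ℤ) : ℂ) • (Nplus ^ n) v := by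
  have hc : ∀ x : H, N (Nplus x) = Nplus (N x) - Y x := by
    intro x
    have h := LinearMap.ext_iff.mp hcomm x
    simp only [LinearMap.sub_apply, Module.End.mul_apply, LinearMap.neg_apply] at h
    rw [sub_eq_iff_eq_add] at h
    rw [h]; abel
  intro n
  induction n with
  | zero =>
    rw [pow_one, hc, hNv, map_zero, zero_sub, hY p q v hv, pow_zero, Module.End.one_apply,
      ← neg_smul]
    congr 1
    push_cast; ring
  | succ n ih =>
    have hmem : (Nplus ^ (n+1)) v ∈ I (p + (n+1), q + (n+1)) :=
      auxMem I Nplus hNplus p q v hv (n+1)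
    have hstep : N ((Nplus ^ (n+1+1)) v)
        = Nplus (N ((Nplus ^ (n+1)) v)) - Y ((Nplus ^ (n+1)) v) := by
      rw [pow_succ', Module.End.mul_apply]
      exact hc _
    rw [hstep, ih, map_smul, hY _ _ _ hmem,
      show Nplus ((Nplus ^ n) v) = (Nplus ^ (n+1)) v from by rw [pow_succ', Module.End.mul_apply],
      ← sub_smul]
    congr 1
    push_cast; ring

lemma auxC (hY : ∀ p q : ℤ, ∀ v ∈ I (p, q), Y v = ((p + q - (-1) : ℤ) : ℂ) • v)
    (hNplus : ∀ p q : ℤ, ∀ v ∈ I (p, q), Nplus v ∈ I (p + 1, q + 1))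
    (hcomm : N * Nplus - Nplus * N = -Y)
    (p q : ℤ) (v : H) (hv : v ∈ I (p, q)) (hNv : N v = 0)
    (n : ℕ) (hn : (n:ℤ) ≤ -1 - p - q) :
    ∀ k : ℕ, (N ^ k) ((Nplus ^ n) v)
      = ((Rconst k n (-1 - p - q) : ℚ) : ℂ) • (Nplus ^ (n - k)) v := by
  intro k
  induction k with
  | zero =>
    rw [pow_zero, Module.End.one_apply, Rconst_zero n _ hn, Nat.sub_zero]
    norm_num
  | succ k ih =>
    rw [pow_succ', Module.End.mul_apply, ih, map_smul]
    rcases lt_or_ge k n with hk | hk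
    · obtain ⟨m, hm⟩ : ∃ m, n - k = m + 1 := ⟨n - k - 1, by omega⟩
      rw [hm, auxB I Y N Nplus hY hNplus hcomm p q v hv hNv m, smul_smul]
      have hsub : n - (k+1) = m := by omega
      rw [hsub]
      congr 1
      have hR : Rconst (k+1) n (-1-p-q)
          = Rconst k n (-1-p-q) * (((n:ℚ) - k) * (((-1-p-q : ℤ):ℚ) - n + k + 1)) :=
        Rconst_succ k n _ hk hn
      rw [hR]
      push_cast
      have hm' : (m : ℚ) = (n : ℚ) - k - 1 := by
        have : (m : ℤ) = (n : ℤ) - k - 1 := by omega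
        exact_mod_cast congrArg (Int.cast : ℤ → ℚ) this
      have hm'' : (m : ℂ) = (n : ℂ) - k - 1 := by
        have : (m : ℤ) = (n : ℤ) - k - 1 := by omega
        exact_mod_cast congrArg (Int.cast : ℤ → ℂ) this
      rw [hm'']
      ring
    · -- k ≥ n : then n - k = 0, N v = 0, and Rconst (k+1) n _ = 0
      have h0 : n - k = 0 := by omega
      rw [h0, pow_zero, Module.End.one_apply, hNv, smul_zero,
        Rconst_eq_zero (k+1) n _ (by omega)]
      norm_num

end
noncomputable def tAux {H : Type*} [AddCommGroup H] [Module ℂ H] (Nplus : Module.End ℂ H)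
    (dec : ℤ → ℤ → ℕ → H) (p q : ℤ) (n k : ℕ) : H :=
  ((-2 * Complex.I) ^ k / (Nat.factorial k : ℂ) * ((Rconst k n (-1 - p - q) : ℚ) : ℂ)) •
    (Nplus ^ (n - k)) (dec p q n)

/-- In weight `m = -1`, if `(w^{p,q}(b))` is a primitive decomposition of
`w`, then `u^{p,q}(b) = Σ_k ((-2i)^k/k!) R(k,k+b,-1-p-q) w^{p,q}(k+b)` is a primitive
decomposition of `exp(-2iN)·w`. -/
theorem stmt8 {H : Type*} [AddCommGroup H] [Module ℂ H] [FiniteDimensional ℂ H]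
    (I : ℤ × ℤ → Submodule ℂ H) (hI : DirectSum.IsInternal I)
    (Y N Nplus : Module.End ℂ H)
    (hY : ∀ p q : ℤ, ∀ v ∈ I (p, q), Y v = ((p + q - (-1) : ℤ) : ℂ) • v)
    (hN : ∀ p q : ℤ, ∀ v ∈ I (p, q), N v ∈ I (p - 1, q - 1))
    (hNplus : ∀ p q : ℤ, ∀ v ∈ I (p, q), Nplus v ∈ I (p + 1, q + 1))
    (hcomm : N * Nplus - Nplus * N = -Y)
    (w : H) (dec : ℤ → ℤ → ℕ → H)
    -- `dec` is a primitive decomposition of `w`, vanishing outside `0 ≤ b ≤ -1-p-q`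
    (hdec1 : ∀ (p q : ℤ) (b : ℕ), dec p q b ∈ I (p, q))
    (hdec2 : ∀ (p q : ℤ) (b : ℕ), N (dec p q b) = 0)
    (hdec3 : ∀ (p q : ℤ) (b : ℕ), (-1 : ℤ) - p - q < (b : ℤ) → dec p q b = 0)
    (hdecfin : (Function.support fun x : ℤ × ℤ × ℕ => dec x.1 x.2.1 x.2.2).Finite)
    (hdecw : w = ∑ᶠ (p : ℤ) (q : ℤ) (b : ℕ), (Nplus ^ b) (dec p q b)) :
    -- the family `u` below is a primitive decomposition of `exp(-2iN)·w`
    let u : ℤ → ℤ → ℕ → H := fun p q b =>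
      ∑ᶠ k : ℕ, (((-2 * Complex.I) ^ k / (Nat.factorial k : ℂ)) *
        ((Rconst k (k + b) (-1 - p - q) : ℚ) : ℂ)) • dec p q (k + b)
    (∀ (p q : ℤ) (b : ℕ), u p q b ∈ I (p, q)) ∧
    (∀ (p q : ℤ) (b : ℕ), N (u p q b) = 0) ∧
    (∀ (p q : ℤ) (b : ℕ), (-1 : ℤ) - p - q < (b : ℤ) → u p q b = 0) ∧
    (Function.support fun x : ℤ × ℤ × ℕ => u x.1 x.2.1 x.2.2).Finite ∧
    (∑ᶠ k : ℕ, ((-2 * Complex.I) ^ k / (Nat.factorial k : ℂ)) • (N ^ k) w) =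
      ∑ᶠ (p : ℤ) (q : ℤ) (b : ℕ), (Nplus ^ b) (u p q b) := by
  classical
  intro u
  set S : Finset (ℤ × ℤ × ℕ) := hdecfin.toFinset with hSdef
  set K : ℕ := S.sup (fun x => x.2.2) with hKdef
  have hSmem : ∀ (p q : ℤ) (n : ℕ), dec p q n ≠ 0 → (p, q, n) ∈ S := by
    intro p q n h
    rw [hSdef, Set.Finite.mem_toFinset]
    exact h
  have hSzero : ∀ x : ℤ × ℤ × ℕ, x ∉ S → dec x.1 x.2.1 x.2.2 = 0 := by
    intro x hx
    by_contra h
    exact hx (by simpa using hSmem x.1 x.2.1 x.2.2 h)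
  have hKbound : ∀ x : ℤ × ℤ × ℕ, x ∈ S → x.2.2 ≤ K := by
    intro x hx
    have := Finset.le_sup (f := fun y : ℤ × ℤ × ℕ => y.2.2) hx
    rw [← hKdef] at this
    exact this
  have hdecK : ∀ (p q : ℤ) (n : ℕ), K < n → dec p q n = 0 := by
    intro p q n h
    by_contra hne
    have := hKbound (p, q, n) (hSmem p q n hne)
    simp only at this
    omega
  have key : ∀ (p q : ℤ) (n k : ℕ),
      (N ^ k) ((Nplus ^ n) (dec p q n))
        = ((Rconst k n (-1 - p - q) : ℚ) : ℂ) • (Nplus ^ (n - k)) (dec p q n) := by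
    intro p q n k
    by_cases h : (n : ℤ) ≤ -1 - p - q
    · exact auxC I Y N Nplus hY hNplus hcomm p q _ (hdec1 p q n) (hdec2 p q n) n h k
    · rw [hdec3 p q n (by omega)]
      simp
  have hu : ∀ (p q : ℤ) (b : ℕ), u p q b =
      ∑ k ∈ Finset.range (K + 1),
        (((-2 * Complex.I) ^ k / (Nat.factorial k : ℂ)) *
          ((Rconst k (k + b) (-1 - p - q) : ℚ) : ℂ)) • dec p q (k + b) := by
    intro p q b
    have hrfl : u p q b = ∑ᶠ k : ℕ, (((-2 * Complex.I) ^ k / (Nat.factorial k : ℂ)) *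
        ((Rconst k (k + b) (-1 - p - q) : ℚ) : ℂ)) • dec p q (k + b) := rfl
    rw [hrfl]
    apply finsum_eq_sum_of_support_subset
    intro k hk
    simp only [Function.mem_support] at hk
    simp only [Finset.coe_range, Set.mem_Iio]
    by_contra h
    exact hk (by rw [hdecK p q (k + b) (by omega), smul_zero])
  set T : Finset (ℤ × ℤ × ℕ) :=
    S.biUnion (fun x => {x.1} ×ˢ ({x.2.1} ×ˢ Finset.range (x.2.2 + 1))) with hTdef
  have hTu : ∀ (p q : ℤ) (b : ℕ), (p, q, b) ∉ T → u p q b = 0 := by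
    intro p q b hpb
    rw [hu]
    apply Finset.sum_eq_zero
    intro k _
    rcases eq_or_ne (dec p q (k + b)) 0 with h | h
    · rw [h, smul_zero]
    · exfalso
      apply hpb
      rw [hTdef]
      apply Finset.mem_biUnion.mpr
      refine ⟨(p, q, k + b), hSmem p q (k + b) h, ?_⟩
      refine Finset.mem_product.mpr ⟨Finset.mem_singleton_self p,
        Finset.mem_product.mpr ⟨Finset.mem_singleton_self q, Finset.mem_range.mpr (by show b < k + b + 1; omega)⟩⟩
  refine ⟨?_, ?_, ?_, ?_, ?_⟩
  · intro p q b
    rw [hu]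
    exact Submodule.sum_mem _ fun k _ => Submodule.smul_mem _ _ (hdec1 p q (k + b))
  · intro p q b
    rw [hu, map_sum]
    exact Finset.sum_eq_zero fun k _ => by rw [map_smul, hdec2, smul_zero]
  · intro p q b hb
    rw [hu]
    exact Finset.sum_eq_zero fun k _ => by
      rw [hdec3 p q (k + b) (by push_cast; omega), smul_zero]
  · apply T.finite_toSet.subset
    intro x hx
    rw [Function.mem_support] at hx
    by_contra h
    exact hx (hTu x.1 x.2.1 x.2.2 (by simpa using h))
  · -- the main identity
    have hw : w = ∑ x ∈ S, (Nplus ^ x.2.2) (dec x.1 x.2.1 x.2.2) := by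
      have hfin : (Function.support fun x : ℤ × ℤ × ℕ =>
          (Nplus ^ x.2.2) (dec x.1 x.2.1 x.2.2)).Finite := by
        apply hdecfin.subset
        intro x hx
        rw [Function.mem_support] at hx ⊢
        intro h0
        exact hx (by rw [h0, map_zero])
      have h1 : (∑ᶠ x : ℤ × ℤ × ℕ, (Nplus ^ x.2.2) (dec x.1 x.2.1 x.2.2))
          = ∑ᶠ (p : ℤ) (q : ℤ) (b : ℕ), (Nplus ^ b) (dec p q b) := finsum_curry₃ _ hfin
      rw [hdecw, ← h1]
      apply finsum_eq_sum_of_support_subset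
      intro x hx
      rw [Function.mem_support] at hx
      have hne : dec x.1 x.2.1 x.2.2 ≠ 0 := fun h0 => hx (by rw [h0, map_zero])
      simpa using hSmem x.1 x.2.1 x.2.2 hne
    have hNkw : ∀ k : ℕ, ((-2 * Complex.I) ^ k / (Nat.factorial k : ℂ)) • (N ^ k) w
        = ∑ x ∈ S, tAux Nplus dec x.1 x.2.1 x.2.2 k := by
      intro k
      rw [hw, map_sum, Finset.smul_sum]
      refine Finset.sum_congr rfl fun x _ => ?_
      rw [key x.1 x.2.1 x.2.2 k, smul_smul]
      simp only [tAux]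
    have hLHSfin : (∑ᶠ k : ℕ, ((-2 * Complex.I) ^ k / (Nat.factorial k : ℂ)) • (N ^ k) w)
        = ∑ k ∈ Finset.range (K + 1), ∑ x ∈ S, tAux Nplus dec x.1 x.2.1 x.2.2 k := by
      have hsupp : (Function.support fun k : ℕ =>
          ((-2 * Complex.I) ^ k / (Nat.factorial k : ℂ)) • (N ^ k) w)
            ⊆ ↑(Finset.range (K + 1)) := by
        intro k hk
        rw [Function.mem_support] at hk
        simp only [Finset.coe_range, Set.mem_Iio]
        by_contra h
        apply hk
        rw [hNkw k]
        apply Finset.sum_eq_zero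
        intro x hxS
        have hxK : x.2.2 ≤ K := hKbound x hxS
        simp only [tAux]
        rw [Rconst_eq_zero k x.2.2 _ (by omega)]
        simp
      rw [finsum_eq_sum_of_support_subset _ hsupp]
      exact Finset.sum_congr rfl fun k _ => hNkw k
    have hGT : ∀ y : ℤ × ℤ × ℕ, y ∉ T → (Nplus ^ y.2.2) (u y.1 y.2.1 y.2.2) = 0 := by
      intro y hy
      rw [hTu y.1 y.2.1 y.2.2 (by simpa using hy), map_zero]
    have hRHS1 : (∑ᶠ (p : ℤ) (q : ℤ) (b : ℕ), (Nplus ^ b) (u p q b))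
        = ∑ y ∈ T, (Nplus ^ y.2.2) (u y.1 y.2.1 y.2.2) := by
      have hfin : (Function.support fun y : ℤ × ℤ × ℕ =>
          (Nplus ^ y.2.2) (u y.1 y.2.1 y.2.2)).Finite := by
        apply T.finite_toSet.subset
        intro y hy
        rw [Function.mem_support] at hy
        by_contra h
        exact hy (hGT y (by simpa using h))
      have h1 : (∑ᶠ y : ℤ × ℤ × ℕ, (Nplus ^ y.2.2) (u y.1 y.2.1 y.2.2))
          = ∑ᶠ (p : ℤ) (q : ℤ) (b : ℕ), (Nplus ^ b) (u p q b) := finsum_curry₃ _ hfin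
      rw [← h1]
      apply finsum_eq_sum_of_support_subset
      intro y hy
      rw [Function.mem_support] at hy
      simp only [Finset.mem_coe]
      by_contra h
      exact hy (hGT y h)
    have hGsum : ∀ (p q : ℤ) (b : ℕ), (Nplus ^ b) (u p q b)
        = ∑ k ∈ Finset.range (K + 1), tAux Nplus dec p q (k + b) k := by
      intro p q b
      rw [hu, map_sum]
      refine Finset.sum_congr rfl fun k _ => ?_
      rw [map_smul]
      simp only [tAux, Nat.add_sub_cancel_left]
    set P : Finset (ℤ × ℤ) := S.image (fun x => (x.1, x.2.1)) with hPdef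
    set S' : Finset (ℤ × ℤ × ℕ) :=
      P.biUnion (fun pq => (Finset.range (K + 1)).image (fun n => (pq.1, pq.2, n))) with hS'def
    have hSsub : S ⊆ S' := by
      intro x hx
      rw [hS'def]
      apply Finset.mem_biUnion.mpr
      refine ⟨(x.1, x.2.1), Finset.mem_image_of_mem _ hx, ?_⟩
      apply Finset.mem_image.mpr
      exact ⟨x.2.2, Finset.mem_range.mpr (by have := hKbound x hx; omega), by simp⟩
    have hTsub : T ⊆ S' := by
      intro y hy
      rw [hTdef] at hy
      rcases Finset.mem_biUnion.mp hy with ⟨x, hxS, hyx⟩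
      rw [Finset.mem_product, Finset.mem_product, Finset.mem_singleton,
        Finset.mem_singleton, Finset.mem_range] at hyx
      obtain ⟨h1, h2, h3⟩ := hyx
      rw [hS'def]
      apply Finset.mem_biUnion.mpr
      refine ⟨(x.1, x.2.1), Finset.mem_image_of_mem _ hxS, ?_⟩
      apply Finset.mem_image.mpr
      refine ⟨y.2.2, Finset.mem_range.mpr (by have := hKbound x hxS; omega), ?_⟩
      rw [← h1, ← h2]
    have hL2 : ∀ k : ℕ, ∑ x ∈ S, tAux Nplus dec x.1 x.2.1 x.2.2 k
        = ∑ x ∈ S', tAux Nplus dec x.1 x.2.1 x.2.2 k := by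
      intro k
      apply Finset.sum_subset hSsub
      intro x _ hxS
      simp [tAux, hSzero x hxS]
    have hR2 : ∑ y ∈ T, (Nplus ^ y.2.2) (u y.1 y.2.1 y.2.2)
        = ∑ y ∈ S', (Nplus ^ y.2.2) (u y.1 y.2.1 y.2.2) := by
      apply Finset.sum_subset hTsub
      intro y _ hyT
      exact hGT y hyT
    have hdisj : (↑P : Set (ℤ × ℤ)).PairwiseDisjoint
        (fun pq : ℤ × ℤ => (Finset.range (K + 1)).image (fun n => (pq.1, pq.2, n))) := by
      intro a _ b _ hab
      rw [Function.onFun, Finset.disjoint_left]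
      intro z hza hzb
      rcases Finset.mem_image.mp hza with ⟨n, _, hn⟩
      rcases Finset.mem_image.mp hzb with ⟨m, _, hm⟩
      apply hab
      rw [← hn] at hm
      have h1 := congrArg (fun v : ℤ × ℤ × ℕ => v.1) hm
      have h2 := congrArg (fun v : ℤ × ℤ × ℕ => v.2.1) hm
      simp only at h1 h2
      exact Prod.ext h1.symm h2.symm
    have hsplit : ∀ f : ℤ × ℤ × ℕ → H, ∑ x ∈ S', f x
        = ∑ pq ∈ P, ∑ n ∈ Finset.range (K + 1), f (pq.1, pq.2, n) := by
      intro f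
      rw [hS'def, Finset.sum_biUnion hdisj]
      refine Finset.sum_congr rfl fun pq _ => ?_
      have hinj : ∀ n ∈ Finset.range (K + 1), ∀ m ∈ Finset.range (K + 1),
          (fun n => (pq.1, pq.2, n)) n = (fun n => (pq.1, pq.2, n)) m → n = m := by
        intro n _ m _ h
        simpa using congrArg (fun v : ℤ × ℤ × ℕ => v.2.2) h
      rw [Finset.sum_image hinj]
    have hcore : ∀ (p q : ℤ) (k : ℕ),
        ∑ n ∈ Finset.range (K + 1), tAux Nplus dec p q n k
          = ∑ b ∈ Finset.range (K + 1), tAux Nplus dec p q (k + b) k := by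
      intro p q k
      have hstep1 : ∑ n ∈ Finset.Ico k (K + 1), tAux Nplus dec p q n k
          = ∑ n ∈ Finset.range (K + 1), tAux Nplus dec p q n k := by
        apply Finset.sum_subset
        · intro x hx
          rw [Finset.mem_Ico] at hx
          exact Finset.mem_range.mpr hx.2
        · intro x hx hx'
          rw [Finset.mem_range] at hx
          rw [Finset.mem_Ico] at hx'
          have hxk : x < k := by omega
          simp [tAux, Rconst_eq_zero k x _ hxk]
      have hstep2 : ∑ n ∈ Finset.Ico k (K + 1), tAux Nplus dec p q n k
          = ∑ b ∈ Finset.range (K + 1 - k), tAux Nplus dec p q (k + b) k :=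
        Finset.sum_Ico_eq_sum_range _ _ _
      have hstep3 : ∑ b ∈ Finset.range (K + 1 - k), tAux Nplus dec p q (k + b) k
          = ∑ b ∈ Finset.range (K + 1), tAux Nplus dec p q (k + b) k := by
        apply Finset.sum_subset (Finset.range_subset_range.mpr (by omega))
        intro b hb hb'
        rw [Finset.mem_range] at hb hb'
        have : K < k + b := by omega
        simp [tAux, hdecK p q (k + b) this]
      rw [← hstep1, hstep2, hstep3]
    rw [hLHSfin, hRHS1, hR2]
    calc ∑ k ∈ Finset.range (K + 1), ∑ x ∈ S, tAux Nplus dec x.1 x.2.1 x.2.2 k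
        = ∑ k ∈ Finset.range (K + 1), ∑ x ∈ S', tAux Nplus dec x.1 x.2.1 x.2.2 k :=
          Finset.sum_congr rfl fun k _ => hL2 k
      _ = ∑ k ∈ Finset.range (K + 1), ∑ pq ∈ P, ∑ n ∈ Finset.range (K + 1),
            tAux Nplus dec pq.1 pq.2 n k :=
          Finset.sum_congr rfl fun k _ => hsplit _
      _ = ∑ pq ∈ P, ∑ k ∈ Finset.range (K + 1), ∑ n ∈ Finset.range (K + 1),
            tAux Nplus dec pq.1 pq.2 n k := Finset.sum_comm
      _ = ∑ pq ∈ P, ∑ b ∈ Finset.range (K + 1), ∑ k ∈ Finset.range (K + 1),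
            tAux Nplus dec pq.1 pq.2 (k + b) k :=
          Finset.sum_congr rfl fun pq _ =>
            (Finset.sum_congr rfl fun k _ => hcore pq.1 pq.2 k).trans Finset.sum_comm
      _ = ∑ pq ∈ P, ∑ b ∈ Finset.range (K + 1), (Nplus ^ b) (u pq.1 pq.2 b) :=
          Finset.sum_congr rfl fun pq _ =>
            Finset.sum_congr rfl fun b _ => (hGsum pq.1 pq.2 b).symm
      _ = ∑ y ∈ S', (Nplus ^ y.2.2) (u y.1 y.2.1 y.2.2) :=
          (hsplit fun y => (Nplus ^ y.2.2) (u y.1 y.2.1 y.2.2)).symm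
end

section
/- Let N₁, …, N_n ∈ End(H) be pairwise commuting nilpotent endomorphisms, and let G : ℂⁿ → End(H) be analytic on Dⁿ with G(0) = id and with the property that for every j ∈ {1,…,n} and every s ∈ Dⁿ with s_j = 0 one has N_j ∘ G(s) = G(s) ∘ N_j. Then there exist a constant C > 0 and a natural number m such that for every y ∈ ℝⁿ with y₁ ≥ y₂ ≥ ⋯ ≥ y_n ≥ 1, every s ∈ Dⁿ with |s_j| = e^{−2π y_j} for all j, and every integer k ≥ 1: ‖(ad(y₁N₁ + ⋯ + y_nN_n))^k (G(s))‖ ≤ C · Σ_{j=1}^n y_j^m e^{−2π y_j}. -/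
/-!
Expand `ad(∑ y_j N_j)^k = ∑_w y_{w_1} ⋯ y_{w_k} ad(N_{w_1}) ⋯ ad(N_{w_k})` over words `w`. The
`ad(N_j)` commute, so each word operator factors through `ad(N_j)` for every letter `j` of `w`,
and `ad(N_j) G(s) = 0` on `{s_j = 0}`; Schwarz's lemma in the variable `s_j` bounds the word's
contribution by `C_w |s_j|`. Taking for `j` the letter of `w` with the largest `y_j` bounds the
coefficient by `y_j^k`. Finally `ad(∑ y_j N_j)` is nilpotent on the finite-dimensional space
`End(H)`, so only the finitely many `k < dim End(H)` contribute, which gives `m = dim End(H)`.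
-/

open Metric Set Real

attribute [local instance] LieRing.ofAssociativeRing

theorem IsNilpotent.pow_finrank_eq_zero {K M : Type*} [Field K] [AddCommGroup M] [Module K M]
    [FiniteDimensional K M] {φ : Module.End K M} (h : IsNilpotent φ) :
    φ ^ Module.finrank K M = 0 := by
  simpa only [h.charpoly_eq_X_pow_finrank, map_pow, Polynomial.aeval_X] using φ.aeval_self_charpoly

theorem exists_norm_le_mul_norm_apply_of_eq_zero {ι E : Type*} [Fintype ι] [NormedAddCommGroup E]
    [NormedSpace ℂ E] {F : (ι → ℂ) → E} (hF : DifferentiableOn ℂ F (ball 0 1)) {j : ι}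
    (hF0 : ∀ s ∈ ball (0 : ι → ℂ) 1, s j = 0 → F s = 0) {r : ℝ} (hr : r < 1) :
    ∃ C, 0 ≤ C ∧ ∀ s ∈ closedBall (0 : ι → ℂ) r, ‖F s‖ ≤ C * ‖s j‖ := by
  obtain ⟨R, hrR, hR1⟩ := exists_between (max_lt hr one_pos)
  have hR0 : 0 < R := (le_max_right r 0).trans_lt hrR
  replace hrR : r < R := (le_max_left r 0).trans_lt hrR
  obtain ⟨M, hM⟩ := (isCompact_closedBall (0 : ι → ℂ) R).exists_bound_of_continuousOn
    (hF.continuousOn.mono (closedBall_subset_ball hR1))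
  have hM0 : 0 ≤ M := (norm_nonneg _).trans (hM 0 (mem_closedBall_self hR0.le))
  refine ⟨M / R, by positivity, fun s hs => ?_⟩
  rw [mem_closedBall_zero_iff] at hs
  classical
  -- Schwarz's lemma for the slice `z ↦ F (update s j z)`, which vanishes at `0`.
  have hslice : MapsTo (Function.update s j) (ball 0 R) (ball 0 R) := by
    intro z hz
    rw [mem_ball_zero_iff] at hz
    rw [mem_ball_zero_iff, pi_norm_lt_iff hR0]
    intro i
    rcases eq_or_ne i j with rfl | hij
    · simpa using hz
    · rw [Function.update_of_ne hij]
      exact ((norm_le_pi_norm s i).trans hs).trans_lt hrR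
  have hzero : F (Function.update s j 0) = 0 :=
    hF0 _ (ball_subset_ball hR1.le (hslice (mem_ball_self hR0))) (Function.update_self ..)
  have hd : DifferentiableOn ℂ (F ∘ Function.update s j) (ball 0 R) :=
    (hF.mono (ball_subset_ball hR1.le)).comp
      (fun z _ => (hasFDerivAt_update s z).differentiableAt.differentiableWithinAt) hslice
  have hmaps : MapsTo (F ∘ Function.update s j) (ball 0 R)
      (closedBall ((F ∘ Function.update s j) 0) M) := by
    rw [Function.comp_apply, hzero]
    exact fun z hz => mem_closedBall_zero_iff.2 (hM _ (ball_subset_closedBall (hslice hz)))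
  have hsj : s j ∈ ball (0 : ℂ) R :=
    mem_ball_zero_iff.2 (((norm_le_pi_norm s j).trans hs).trans_lt hrR)
  simpa [hzero] using Complex.dist_le_div_mul_dist_of_mapsTo_ball hd hmaps hsj

open scoped IsMulCommutative in
theorem exists_pow_sum_smul_eq_sum_words {ι R A : Type*} [Fintype ι] [CommSemiring R] [Semiring A]
    [Algebra R A] {g : ι → A} (hg : ∀ i j, Commute (g i) (g j)) (k : ℕ) :
    ∃ P : (Fin k → ι) → A, (∀ w i, ∃ a, P w = a * g (w i)) ∧
      ∀ c : ι → R, (∑ j, c j • g j) ^ k = ∑ w, (∏ i, c (w i)) • P w := by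
  let S := Algebra.adjoin R (Set.range g)
  have : IsMulCommutative S := Algebra.isMulCommutative_adjoin R <| by
    rintro _ ⟨i, rfl⟩ _ ⟨j, rfl⟩
    exact hg i j
  let gS : ι → S := fun j => ⟨g j, Algebra.subset_adjoin ⟨j, rfl⟩⟩
  refine ⟨fun w => ((∏ i, gS (w i) : S) : A), fun w i => ⟨_, congrArg Subtype.val
    (Finset.prod_erase_mul _ _ (Finset.mem_univ i)).symm⟩, fun c => ?_⟩
  have h := congrArg Subtype.val (Fintype.sum_pow (fun j => c j • gS j) k)
  push_cast [Finset.prod_smul] at h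
  exact h

theorem exists_norm_pow_succ_sum_smul_apply_le {ι E : Type*} [Fintype ι] [NormedAddCommGroup E]
    [NormedSpace ℂ E] [FiniteDimensional ℂ E] {g : ι → Module.End ℂ E}
    (hg : ∀ i j, Commute (g i) (g j)) {F : (ι → ℂ) → E} (hF : DifferentiableOn ℂ F (ball 0 1))
    (hF0 : ∀ j, ∀ s ∈ ball (0 : ι → ℂ) 1, s j = 0 → g j (F s) = 0) {r : ℝ} (hr : r < 1) (k : ℕ) :
    ∃ C, 0 ≤ C ∧ ∀ c : ι → ℂ, ∀ s ∈ closedBall (0 : ι → ℂ) r,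
      ‖((∑ j, c j • g j) ^ (k + 1)) (F s)‖ ≤ C * ∑ j, ‖c j‖ ^ (k + 1) * ‖s j‖ := by
  obtain ⟨P, hPg, hexpand⟩ := exists_pow_sum_smul_eq_sum_words hg (R := ℂ) (k + 1)
  have hbound : ∀ w i, ∃ C, 0 ≤ C ∧ ∀ s ∈ closedBall (0 : ι → ℂ) r,
      ‖P w (F s)‖ ≤ C * ‖s (w i)‖ := by
    intro w i
    obtain ⟨a, ha⟩ := hPg w i
    refine exists_norm_le_mul_norm_apply_of_eq_zero ?_ (fun s hs hsi => ?_) hr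
    · exact (LinearMap.toContinuousLinearMap (P w)).differentiable.comp_differentiableOn hF
    · rw [ha, Module.End.mul_apply, hF0 _ s hs hsi, map_zero]
  choose C hC0 hC using hbound
  have hCsum : ∀ w, 0 ≤ ∑ i, C w i := fun w => Finset.sum_nonneg fun i _ => hC0 w i
  refine ⟨∑ w, ∑ i, C w i, Finset.sum_nonneg fun w _ => hCsum w, fun c s hs => ?_⟩
  -- In each word, the letter `j` of largest `‖c j‖` controls both the coefficient and the size.
  have hword : ∀ w : Fin (k + 1) → ι, ‖(∏ i, c (w i)) • P w (F s)‖ ≤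
      (∑ i, C w i) * ∑ j, ‖c j‖ ^ (k + 1) * ‖s j‖ := by
    intro w
    obtain ⟨i, -, hi⟩ :=
      Finset.exists_max_image Finset.univ (fun i => ‖c (w i)‖) Finset.univ_nonempty
    calc ‖(∏ i, c (w i)) • P w (F s)‖ ≤ ‖c (w i)‖ ^ (k + 1) * (C w i * ‖s (w i)‖) := by
          have hprod : ∏ i', ‖c (w i')‖ ≤ ‖c (w i)‖ ^ (k + 1) := by
            simpa using Finset.prod_le_prod (fun i' _ => norm_nonneg _) hi
          rw [norm_smul, norm_prod]
          exact mul_le_mul hprod (hC w i s hs) (norm_nonneg _) (by positivity)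
      _ = C w i * (‖c (w i)‖ ^ (k + 1) * ‖s (w i)‖) := by ring
      _ ≤ (∑ i, C w i) * ∑ j, ‖c j‖ ^ (k + 1) * ‖s j‖ := by
          refine mul_le_mul (Finset.single_le_sum (fun i _ => hC0 w i) (Finset.mem_univ i)) ?_
            (by positivity) (hCsum w)
          exact Finset.single_le_sum (f := fun j => ‖c j‖ ^ (k + 1) * ‖s j‖)
              (fun j _ => by positivity) (Finset.mem_univ _)
  calc ‖((∑ j, c j • g j) ^ (k + 1)) (F s)‖ = ‖∑ w, (∏ i, c (w i)) • P w (F s)‖ := by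
        rw [hexpand, LinearMap.sum_apply]; rfl
    _ ≤ ∑ w, ‖(∏ i, c (w i)) • P w (F s)‖ := norm_sum_le _ _
    _ ≤ ∑ w, (∑ i, C w i) * ∑ j, ‖c j‖ ^ (k + 1) * ‖s j‖ := Finset.sum_le_sum fun w _ => hword w
    _ = (∑ w, ∑ i, C w i) * ∑ j, ‖c j‖ ^ (k + 1) * ‖s j‖ := by rw [Finset.sum_mul]

theorem exists_norm_pow_sum_smul_apply_le_of_isNilpotent {ι E : Type*} [Fintype ι]
    [NormedAddCommGroup E] [NormedSpace ℂ E] [FiniteDimensional ℂ E] {g : ι → Module.End ℂ E}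
    (hg : ∀ i j, Commute (g i) (g j)) (hnil : ∀ j, IsNilpotent (g j)) {F : (ι → ℂ) → E}
    (hF : DifferentiableOn ℂ F (ball 0 1))
    (hF0 : ∀ j, ∀ s ∈ ball (0 : ι → ℂ) 1, s j = 0 → g j (F s) = 0) {r : ℝ} (hr : r < 1) :
    ∃ C, 0 < C ∧ ∀ c : ι → ℂ, (∀ j, 1 ≤ ‖c j‖) → ∀ s ∈ closedBall (0 : ι → ℂ) r, ∀ k, 1 ≤ k →
      ‖((∑ j, c j • g j) ^ k) (F s)‖ ≤ C * ∑ j, ‖c j‖ ^ Module.finrank ℂ E * ‖s j‖ := by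
  set K := Module.finrank ℂ E
  choose C hC0 hC using exists_norm_pow_succ_sum_smul_apply_le hg hF hF0 hr
  obtain ⟨M, hM⟩ := Finite.exists_le fun k : Fin K => C k
  refine ⟨max M 1, by positivity, fun c hc s hs k hk => ?_⟩
  obtain ⟨k, rfl⟩ := Nat.exists_eq_add_of_le' hk
  rcases le_or_gt K (k + 1) with hKk | hkK
  · have hsum_nil : IsNilpotent (∑ j, c j • g j) := Commute.isNilpotent_sum
      (fun j _ => (hnil j).smul _) fun i j _ _ => ((hg i j).smul_left _).smul_right _
    rw [pow_eq_zero_of_le hKk hsum_nil.pow_finrank_eq_zero, LinearMap.zero_apply, norm_zero]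
    positivity
  calc _ ≤ C k * ∑ j, ‖c j‖ ^ (k + 1) * ‖s j‖ := hC k c s hs
    _ ≤ max M 1 * ∑ j, ‖c j‖ ^ K * ‖s j‖ := by
      gcongr with j
      · exact (hM ⟨k, by omega⟩).trans (le_max_left _ _)
      · exact hc j

theorem iterate_commutator_sum_smul_eq {ι R A : Type*} [Fintype ι] [CommRing R] [Ring A]
    [Algebra R A] (N : ι → A) (c : ι → R) (k : ℕ) :
    (fun B => (∑ j, c j • N j) * B - B * ∑ j, c j • N j)^[k] =
      ⇑((∑ j, c j • LieAlgebra.ad R A (N j)) ^ k) := by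
  simp only [← map_smul, ← map_sum, Module.End.coe_pow]
  rfl

theorem stmt9_general {H : Type*} [NormedAddCommGroup H] [NormedSpace ℂ H] [FiniteDimensional ℂ H]
    (n : ℕ) (N : Fin n → (H →L[ℂ] H))
    (hnil : ∀ j, IsNilpotent (N j))
    (hcomm : ∀ i j, N i * N j = N j * N i)
    (G : (Fin n → ℂ) → (H →L[ℂ] H))
    (hG : AnalyticOnNhd ℂ G {s : Fin n → ℂ | ∀ j, ‖s j‖ < 1})
    (hGcomm : ∀ (j : Fin n) (s : Fin n → ℂ), (∀ i, ‖s i‖ < 1) → s j = 0 →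
      N j * G s = G s * N j) :
    ∃ C : ℝ, 0 < C ∧ ∃ m : ℕ,
      ∀ y : Fin n → ℝ,
        (∀ i j : Fin n, i ≤ j → y j ≤ y i) → (∀ j, 1 ≤ y j) →
        ∀ s : Fin n → ℂ, (∀ j, ‖s j‖ = Real.exp (-(2 * π * y j))) →
        ∀ k : ℕ, 1 ≤ k →
          ‖(fun B : H →L[ℂ] H =>
              (∑ j, (y j : ℂ) • N j) * B - B * (∑ j, (y j : ℂ) • N j))^[k] (G s)‖ ≤
            C * ∑ j, y j ^ m * Real.exp (-(2 * π * y j)) := by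
  have hpolydisc : {s : Fin n → ℂ | ∀ j, ‖s j‖ < 1} = ball 0 1 := by
    ext s; simp [pi_norm_lt_iff]
  have hG0 : ∀ j, ∀ s ∈ ball (0 : Fin n → ℂ) 1, s j = 0 →
      LieAlgebra.ad ℂ (H →L[ℂ] H) (N j) (G s) = 0 := by
    intro j s hs hsj
    rw [← hpolydisc] at hs
    simp [Ring.lie_def, hGcomm j s hs hsj]
  obtain ⟨C, hC, hbound⟩ := exists_norm_pow_sum_smul_apply_le_of_isNilpotent
    (fun i j => LieAlgebra.commute_ad_of_commute (hcomm i j))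
    (fun j => LieAlgebra.ad_nilpotent_of_nilpotent (hnil j)) (hpolydisc ▸ hG.differentiableOn) hG0
    (exp_lt_one_iff.2 (by linarith [pi_pos]) : exp (-(2 * π)) < 1)
  refine ⟨C, hC, Module.finrank ℂ (H →L[ℂ] H), fun y _ hy s hs k hk => ?_⟩
  have hs_mem : s ∈ closedBall 0 (exp (-(2 * π))) := by
    rw [mem_closedBall_zero_iff, pi_norm_le_iff_of_nonneg (exp_pos _).le]
    intro j
    rw [hs j, exp_le_exp]
    nlinarith [hy j, pi_pos]
  have hy_norm : ∀ j, ‖(y j : ℂ)‖ = y j := fun j =>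
    Complex.norm_of_nonneg (zero_le_one.trans (hy j))
  rw [iterate_commutator_sum_smul_eq]
  simpa only [hy_norm, hs] using
    hbound (fun j => y j) (fun j => (hy_norm j).symm ▸ hy j) s hs_mem k hk

/-- If `N₁, …, N_n` are pairwise commuting nilpotent operators and
`G : ℂⁿ → End(H)` is analytic on the unit polydisc with `G(0) = id` and `[N_j, G(s)] = 0`
whenever `s_j = 0`, then `‖(ad(y₁N₁ + ⋯ + y_nN_n))^k G(s)‖ ≤ C · Σ_j y_j^m e^{-2πy_j}`
for `y₁ ≥ ⋯ ≥ y_n ≥ 1`, `|s_j| = e^{-2πy_j}`, `k ≥ 1`. -/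
theorem stmt9 {H : Type*} [NormedAddCommGroup H] [NormedSpace ℂ H] [FiniteDimensional ℂ H]
    (n : ℕ) (N : Fin n → (H →L[ℂ] H))
    (hnil : ∀ j, IsNilpotent (N j))
    (hcomm : ∀ i j, N i * N j = N j * N i)
    (G : (Fin n → ℂ) → (H →L[ℂ] H))
    (hG : AnalyticOnNhd ℂ G {s : Fin n → ℂ | ∀ j, ‖s j‖ < 1})
    (hG0 : G 0 = 1)
    (hGcomm : ∀ (j : Fin n) (s : Fin n → ℂ), (∀ i, ‖s i‖ < 1) → s j = 0 →
      N j * G s = G s * N j) :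
    ∃ C : ℝ, 0 < C ∧ ∃ m : ℕ,
      ∀ y : Fin n → ℝ,
        (∀ i j : Fin n, i ≤ j → y j ≤ y i) → (∀ j, 1 ≤ y j) →
        ∀ s : Fin n → ℂ, (∀ j, ‖s j‖ = Real.exp (-(2 * π * y j))) →
        ∀ k : ℕ, 1 ≤ k →
          ‖(fun B : H →L[ℂ] H =>
              (∑ j, (y j : ℂ) • N j) * B - B * (∑ j, (y j : ℂ) • N j))^[k] (G s)‖ ≤
            C * ∑ j, y j ^ m * Real.exp (-(2 * π * y j)) :=
  stmt9_general n N hnil hcomm G hG hGcomm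
end

section
/- Let h ∈ H, and let z : ℕ → ℂⁿ be a sequence such that for each j ∈ {1,…,n}: Im z_j(k) → ∞ as k → ∞, and Re z_j(k) ∈ [0,1] for all k. Suppose the sequence k ↦ Σ_{j=1}^n z_j(k) · N_j(h) is bounded in H. Then: (a) there exists θ ∈ ℝⁿ with θ_j > 0 for every j such that Σ_{j=1}^n θ_j · N_j(h) = 0; and (b) for every α > 0 there exist w ∈ ℂⁿ with Im w_j ≥ α for every j and a strictly increasing function φ : ℕ → ℕ such that Σ_{j=1}^n z_j(φ(k)) · N_j(h) → Σ_{j=1}^n w_j · N_j(h) as k → ∞. (Conclusion (a) is the precise form of the paper's conclusion that h lies in W(N₁,…,N_n)₀: h is annihilated by an element of the open cone spanned by N₁,…,N_n.) -/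
open Filter Topology

lemma key_decomp {𝕜 E F : Type*} [NontriviallyNormedField 𝕜] [CompleteSpace 𝕜]
    [NormedAddCommGroup E] [NormedSpace 𝕜 E] [FiniteDimensional 𝕜 E]
    [NormedAddCommGroup F] [NormedSpace 𝕜 F] (T : E →ₗ[𝕜] F) :
    ∃ C : ℝ, 0 ≤ C ∧ ∀ c : E, ∃ ℓ ∈ LinearMap.ker T, ‖c - ℓ‖ ≤ C * ‖T c‖ := by
  obtain ⟨p, hp⟩ := Submodule.exists_isCompl (LinearMap.ker T)
  have hker : LinearMap.ker (T.comp p.subtype) = ⊥ := by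
    ext x
    simp only [LinearMap.mem_ker, LinearMap.comp_apply, Submodule.subtype_apply,
      Submodule.mem_bot]
    constructor
    · intro hx
      have hmem : (x : E) ∈ LinearMap.ker T ⊓ p := ⟨hx, x.2⟩
      rw [hp.inf_eq_bot] at hmem
      exact Subtype.ext hmem
    · rintro rfl; simp
  obtain ⟨K, hK, hant⟩ := (T.comp p.subtype).exists_antilipschitzWith hker
  refine ⟨K, K.coe_nonneg, fun c => ?_⟩
  set ℓ : E := ((LinearMap.ker T).linearProjOfIsCompl p hp c : E) with hℓ
  have hmemker : ℓ ∈ LinearMap.ker T := ((LinearMap.ker T).linearProjOfIsCompl p hp c).2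
  have hmemp : c - ℓ ∈ p := by
    have hsum := Submodule.projection_add_projection_eq_self hp c
    have : c - ℓ = (p.linearProjOfIsCompl (LinearMap.ker T) hp.symm c : E) := by
      rw [eq_comm, eq_sub_iff_add_eq, add_comm]
      exact hsum
    rw [this]; exact Subtype.coe_prop _
  refine ⟨ℓ, hmemker, ?_⟩
  have hx := hant.le_mul_dist ⟨c - ℓ, hmemp⟩ 0
  simp only [dist_zero_right, map_zero, LinearMap.comp_apply, Submodule.subtype_apply] at hx
  have hTc : T (c - ℓ) = T c := by
    rw [map_sub, LinearMap.mem_ker.mp hmemker, sub_zero]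
  calc ‖c - ℓ‖ = ‖(⟨c - ℓ, hmemp⟩ : p)‖ := rfl
    _ ≤ K * ‖T (c - ℓ)‖ := by simpa using hx
    _ = K * ‖T c‖ := by rw [hTc]

/-- If `Im z_j(k) → ∞`, `Re z_j(k) ∈ [0,1]`, and the sequence
`Σ_j z_j(k) N_j(h)` is bounded, then (a) some positive real combination of the `N_j`
annihilates `h` (i.e. `h ∈ W(N₁,…,N_n)₀`), and (b) along a subsequence
`Σ_j z_j(k) N_j(h)` converges to `Σ_j w_j N_j(h)` with all `Im w_j ≥ α`. -/
theorem stmt10 {H : Type*} [NormedAddCommGroup H] [NormedSpace ℂ H]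
    [FiniteDimensional ℂ H]
    (n : ℕ) (N : Fin n → (H →ₗ[ℂ] H)) (h : H)
    (z : ℕ → Fin n → ℂ)
    (him : ∀ j : Fin n, Tendsto (fun k => (z k j).im) atTop atTop)
    (hre : ∀ (k : ℕ) (j : Fin n), (z k j).re ∈ Set.Icc (0 : ℝ) 1)
    (hbd : ∃ M : ℝ, ∀ k : ℕ, ‖∑ j, z k j • N j h‖ ≤ M) :
    (∃ θ : Fin n → ℝ, (∀ j, 0 < θ j) ∧ ∑ j, (θ j : ℂ) • N j h = 0) ∧
    (∀ α : ℝ, 0 < α → ∃ w : Fin n → ℂ, (∀ j, α ≤ (w j).im) ∧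
      ∃ φ : ℕ → ℕ, StrictMono φ ∧
        Tendsto (fun k => ∑ j, z (φ k) j • N j h) atTop (𝓝 (∑ j, w j • N j h))) := by
  obtain ⟨M, hM⟩ := hbd
  have hM0 : 0 ≤ M := le_trans (norm_nonneg _) (hM 0)
  -- the complex linear map
  set Tc : (Fin n → ℂ) →ₗ[ℂ] H :=
    ∑ j, LinearMap.smulRight (LinearMap.proj j) (N j h) with hTc
  have hTcapp : ∀ c : Fin n → ℂ, Tc c = ∑ j, c j • N j h := by
    intro c
    simp [hTc, LinearMap.sum_apply]
  -- the real linear map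
  set Tr : (Fin n → ℝ) →ₗ[ℝ] H :=
    ∑ j, LinearMap.smulRight (LinearMap.proj j) (N j h) with hTr
  have hTrapp : ∀ c : Fin n → ℝ, Tr c = ∑ j, c j • N j h := by
    intro c
    simp [hTr, LinearMap.sum_apply]
  constructor
  · -- part (a)
    set B : ℝ := M + ∑ j, ‖N j h‖ with hB
    have hTrbd : ∀ k, ‖Tr (fun j => (z k j).im)‖ ≤ B := by
      intro k
      have key : Complex.I • Tr (fun j => (z k j).im)
          = ∑ j, z k j • N j h - ∑ j, ((z k j).re : ℂ) • N j h := by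
        rw [hTrapp, Finset.smul_sum, ← Finset.sum_sub_distrib]
        refine Finset.sum_congr rfl fun j _ => ?_
        rw [← sub_smul, ← Complex.coe_smul, smul_smul]
        congr 1
        simp [Complex.ext_iff]
      have h1 : ‖Tr (fun j => (z k j).im)‖ = ‖Complex.I • Tr (fun j => (z k j).im)‖ := by
        rw [norm_smul, Complex.norm_I, one_mul]
      rw [h1, key]
      refine le_trans (norm_sub_le _ _) (add_le_add (hM k) ?_)
      refine le_trans (norm_sum_le _ _) (Finset.sum_le_sum fun j _ => ?_)
      rw [norm_smul]
      have := hre k j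
      have habs : ‖((z k j).re : ℂ)‖ ≤ 1 := by
        rw [Complex.norm_real, Real.norm_eq_abs, abs_le]
        constructor <;> [linarith [this.1]; exact this.2]
      nlinarith [norm_nonneg (N j h)]
    obtain ⟨C, hC0, hCkey⟩ := key_decomp Tr
    choose ℓ hℓker hℓ using fun k => hCkey (fun j => (z k j).im)
    have hbig : ∀ᶠ k in atTop, ∀ j, C * B < (z k j).im :=
      eventually_all.2 fun j => (him j).eventually_gt_atTop (C * B)
    obtain ⟨k0, hk0⟩ := hbig.exists
    refine ⟨ℓ k0, fun j => ?_, ?_⟩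
    · have hcoord : ‖(fun j => (z k0 j).im) j - ℓ k0 j‖ ≤ C * B := by
        calc ‖(fun j => (z k0 j).im) j - ℓ k0 j‖
            = ‖((fun j => (z k0 j).im) - ℓ k0) j‖ := by simp
          _ ≤ ‖(fun j => (z k0 j).im) - ℓ k0‖ := norm_le_pi_norm _ j
          _ ≤ C * ‖Tr (fun j => (z k0 j).im)‖ := hℓ k0
          _ ≤ C * B := by nlinarith [hTrbd k0]
      have := abs_le.mp (by simpa [Real.norm_eq_abs] using hcoord)
      have := hk0 j
      linarith [this]
    · have : Tr (ℓ k0) = 0 := LinearMap.mem_ker.mp (hℓker k0)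
      rw [hTrapp] at this
      rw [← this]
      exact Finset.sum_congr rfl fun j _ => (Complex.coe_smul _ _)
  · -- part (b)
    intro α hα
    obtain ⟨C, hC0, hCkey⟩ := key_decomp Tc
    choose ℓ hℓker hℓ using fun k => hCkey (z k)
    set x : ℕ → Fin n → ℂ := fun k => z k - ℓ k with hx
    have hxbd : ∀ k, ‖x k‖ ≤ C * M := by
      intro k
      refine le_trans (hℓ k) ?_
      have := hM k
      rw [hTcapp]
      nlinarith
    have hxball : ∀ k, x k ∈ Metric.closedBall (0 : Fin n → ℂ) (C * M) := by
      intro k; simpa using hxbd k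
    obtain ⟨a, ha, φ, hφ, hconv⟩ := tendsto_subseq_of_bounded
      Metric.isBounded_closedBall hxball
    have haball : a ∈ Metric.closedBall (0 : Fin n → ℂ) (C * M) :=
      Metric.isClosed_closedBall.closure_subset ha
    have habd : ‖a‖ ≤ C * M := by simpa using haball
    obtain ⟨m, hm⟩ := (eventually_all.2 fun j =>
      (him j).eventually_ge_atTop (α + 2 * (C * M))).exists
    refine ⟨a + (z m - x m), fun j => ?_, φ, hφ, ?_⟩
    · have h1 : |(a j).im| ≤ C * M :=
        le_trans (Complex.abs_im_le_norm _) (le_trans (norm_le_pi_norm a j) habd)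
      have h2 : |((x m) j).im| ≤ C * M :=
        le_trans (Complex.abs_im_le_norm _) (le_trans (norm_le_pi_norm (x m) j) (hxbd m))
      have h3 := hm j
      have : ((a + (z m - x m)) j).im = (a j).im + (z m j).im - ((x m) j).im := by
        simp [Complex.add_im, Complex.sub_im]
        ring
      rw [this]
      have := abs_le.mp h1
      have := abs_le.mp h2
      linarith [this.1]
    · have hTw : Tc (a + (z m - x m)) = Tc a := by
        have : z m - x m = ℓ m := by simp [hx]
        rw [this, map_add, LinearMap.mem_ker.mp (hℓker m), add_zero]
      have hcont : Continuous Tc := Tc.continuous_of_finiteDimensional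
      have hlim : Tendsto (fun k => Tc (x (φ k))) atTop (𝓝 (Tc a)) :=
        (hcont.tendsto a).comp hconv
      have heq : ∀ k, Tc (x (φ k)) = ∑ j, z (φ k) j • N j h := by
        intro k
        have : Tc (x (φ k)) = Tc (z (φ k)) := by
          rw [hx]
          simp only [map_sub, LinearMap.mem_ker.mp (hℓker (φ k)), sub_zero]
        rw [this, hTcapp]
      have hgoal : ∑ j, (a + (z m - x m)) j • N j h = Tc a := by
        rw [← hTcapp, hTw]
      rw [hgoal]
      exact hlim.congr heq
end

section
/- The intersection of the closure of S in D with the locus {(s₁,s₂,v₀,v₁,v₂) ∈ D : s₁·s₂ = 0} equals the set {(s₁, s₂, −(h₁+h₂ω), 0, 0) : s₁, s₂ ∈ ℂ, |s₁| < 1, |s₂| < 1, s₁·s₂ = 0, (h₁,h₂) ∈ ℤ²}; in other words, over the locus s₁s₂ = 0 the closure consists exactly of the points whose third coordinate lies in the lattice ℤ + ℤω and whose last two coordinates vanish. -/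
/-!
On an integral point with lattice parameters `λ = h₃ + h₄ω` and `μ = h₁ + h₂ω`, the continuous
function `v₁ v₂ s₁ s₂` takes the value `λ²`. It vanishes at a limit point with `s₁ s₂ = 0`, so by
discreteness of the lattice `ℤ + ℤω` every integral point nearby has `λ = 0`, hence lies in the
closed set `{v₀ ∈ -(ℤ + ℤω), v₁ = v₂ = 0}`. Conversely the integral points with `λ = 0` are
`(q z₁, q z₂, -μ, 0, 0)` with `q z = exp (2πiz)`, and `q` maps the upper half-plane onto the
punctured unit disc, whose closure contains the whole disc.
-/

open Filter Complex Function.Periodic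

def PeriodPair.ofImNeZero {ω : ℂ} (hω : ω.im ≠ 0) : PeriodPair where
  ω₁ := 1
  ω₂ := ω
  indep := by
    refine LinearIndependent.pair_iff.mpr fun s t hst ↦ ?_
    have ht : t = 0 := by simpa [hω] using congrArg Complex.im hst
    subst ht
    simpa using hst

namespace PeriodPair

lemma mem_lattice_ofImNeZero {ω : ℂ} {hω : ω.im ≠ 0} {x : ℂ} :
    x ∈ (ofImNeZero hω).lattice ↔ ∃ m n : ℤ, (m : ℂ) + n * ω = x := by
  simp [mem_lattice, ofImNeZero]

lemma exists_pos_eq_zero_of_norm_lt (L : PeriodPair) :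
    ∃ δ > 0, ∀ l ∈ L.lattice, ‖l‖ < δ → l = 0 := by
  obtain ⟨δ, hδ, hball⟩ := Metric.mem_nhds_iff.mp (L.compl_lattice_sdiff_singleton_mem_nhds 0)
  refine ⟨δ, hδ, fun l hl hlδ ↦ ?_⟩
  by_contra hl0
  exact hball (mem_ball_zero_iff.mpr hlδ) ⟨hl, hl0⟩

end PeriodPair

lemma ball_subset_closure_qParam_image_upperHalfPlane :
    Metric.ball (0 : ℂ) 1 ⊆ closure (qParam 1 '' {z | 0 < z.im}) := by
  intro q hq
  rcases eq_or_ne q 0 with rfl | hq0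
  · have : (comap im atTop).NeBot := atTop_neBot.comap_of_surj im_surjective
    exact mem_closure_of_tendsto ((qParam_tendsto one_pos).mono_right nhdsWithin_le_nhds)
      ((tendsto_comap.eventually (eventually_gt_atTop 0)).mono fun z hz ↦ ⟨z, hz, rfl⟩)
  · refine subset_closure ⟨invQParam 1 q, ?_, qParam_right_inv one_ne_zero hq0⟩
    have hlog : Real.log ‖q‖ < 0 := Real.log_neg (norm_pos_iff.mpr hq0) (mem_ball_zero_iff.mp hq)
    rw [Set.mem_ofPred_eq, im_invQParam]
    exact mul_pos_of_neg_of_neg (div_neg_of_neg_of_pos (by norm_num) (by positivity)) hlog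

def integralPoints (ω : ℂ) : Set (ℂ × ℂ × ℂ × ℂ × ℂ) :=
  {p | ∃ z₁ z₂ : ℂ, 0 < z₁.im ∧ 0 < z₂.im ∧ ∃ h₁ h₂ h₃ h₄ : ℤ,
    p = (Complex.exp (2 * Real.pi * Complex.I * z₁),
         Complex.exp (2 * Real.pi * Complex.I * z₂),
         (z₁ + z₂) * ((h₃ : ℂ) + (h₄ : ℂ) * ω) - ((h₁ : ℂ) + (h₂ : ℂ) * ω),
         -((h₃ : ℂ) + (h₄ : ℂ) * ω) * Complex.exp (-(2 * Real.pi * Complex.I * z₁)),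
         -((h₃ : ℂ) + (h₄ : ℂ) * ω) * Complex.exp (-(2 * Real.pi * Complex.I * z₂)))}

lemma mem_closure_integralPoints (ω : ℂ) {s₁ s₂ : ℂ} (hs₁ : ‖s₁‖ < 1) (hs₂ : ‖s₂‖ < 1) (a b : ℤ) :
    (s₁, s₂, -((a : ℂ) + b * ω), 0, 0) ∈ closure (integralPoints ω) := by
  set E := qParam 1 '' {z | 0 < z.im}
  have hE : E ×ˢ E ×ˢ {-((a : ℂ) + b * ω)} ×ˢ {0} ×ˢ {0} ⊆ integralPoints ω := by
    rintro ⟨_, _, _, _, _⟩ ⟨⟨z₁, hz₁, rfl⟩, ⟨z₂, hz₂, rfl⟩, rfl, rfl, rfl⟩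
    exact ⟨z₁, z₂, hz₁, hz₂, a, b, 0, 0, by simp [qParam]⟩
  refine closure_mono hE ?_
  simp only [closure_prod_eq, closure_singleton]
  exact ⟨ball_subset_closure_qParam_image_upperHalfPlane (mem_ball_zero_iff.mpr hs₁),
    ball_subset_closure_qParam_image_upperHalfPlane (mem_ball_zero_iff.mpr hs₂), rfl, rfl, rfl⟩

lemma exists_lattice_and_eq_zero_of_mem_closure_integralPoints {ω : ℂ} (hω : ω.im ≠ 0)
    {p : ℂ × ℂ × ℂ × ℂ × ℂ} (hp : p ∈ closure (integralPoints ω)) (h₀ : p.1 * p.2.1 = 0) :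
    (∃ h₁ h₂ : ℤ, p.2.2.1 = -((h₁ : ℂ) + (h₂ : ℂ) * ω)) ∧ p.2.2.2.1 = 0 ∧ p.2.2.2.2 = 0 := by
  set L := PeriodPair.ofImNeZero hω
  obtain ⟨δ, hδ, hL⟩ := L.exists_pos_eq_zero_of_norm_lt
  let g : ℂ × ℂ × ℂ × ℂ × ℂ → ℂ := fun q ↦ q.2.2.2.1 * q.2.2.2.2 * (q.1 * q.2.1)
  let U := {q | ‖g q‖ < δ ^ 2}
  let C := {q : ℂ × ℂ × ℂ × ℂ × ℂ | -q.2.2.1 ∈ L.lattice ∧ q.2.2.2.1 = 0 ∧ q.2.2.2.2 = 0}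
  have hU : IsOpen U := isOpen_lt (by fun_prop) continuous_const
  have hC : IsClosed C := (L.isClosed_lattice.preimage (by fun_prop)).inter
    ((isClosed_eq (by fun_prop) continuous_const).inter (isClosed_eq (by fun_prop) continuous_const))
  have hUC : U ∩ integralPoints ω ⊆ C := by
    rintro q ⟨hgq, z₁, z₂, -, -, h₁, h₂, h₃, h₄, hq⟩
    set l := (h₃ : ℂ) + h₄ * ω
    have hg : g q = l ^ 2 := by
      simp only [g, hq, exp_neg]
      field_simp
    have hl : l = 0 := hL l (PeriodPair.mem_lattice_ofImNeZero.mpr ⟨h₃, h₄, rfl⟩)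
      (lt_of_pow_lt_pow_left₀ 2 hδ.le (by simpa [U, hg] using hgq))
    refine ⟨PeriodPair.mem_lattice_ofImNeZero.mpr ⟨h₁, h₂, ?_⟩, ?_, ?_⟩ <;> simp [hq, hl]
  obtain ⟨hv₀, hv₁, hv₂⟩ := hC.closure_subset_iff.mpr hUC
    (hU.inter_closure ⟨show ‖g p‖ < δ ^ 2 by simp [g, h₀, hδ], hp⟩)
  obtain ⟨m, n, hmn⟩ := PeriodPair.mem_lattice_ofImNeZero.mp hv₀
  exact ⟨⟨m, n, by linear_combination hmn⟩, hv₁, hv₂⟩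

/-- For the two-parameter degeneration of the paper's second example,
the closure of the set `S` of integral points inside `D`, intersected with the locus
`s₁·s₂ = 0`, is exactly the set of points `(s₁, s₂, -(h₁+h₂ω), 0, 0)` with `|s₁| < 1`,
`|s₂| < 1`, `s₁·s₂ = 0` and `(h₁,h₂) ∈ ℤ²`. -/
theorem stmt13 (ω : ℂ) (hω : ω.im ≠ 0)
    (S : Set (ℂ × ℂ × ℂ × ℂ × ℂ))
    (hS : S = {p | ∃ z₁ z₂ : ℂ, 0 < z₁.im ∧ 0 < z₂.im ∧ ∃ h₁ h₂ h₃ h₄ : ℤ,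
      p = (Complex.exp (2 * Real.pi * Complex.I * z₁),
           Complex.exp (2 * Real.pi * Complex.I * z₂),
           (z₁ + z₂) * ((h₃ : ℂ) + (h₄ : ℂ) * ω) - ((h₁ : ℂ) + (h₂ : ℂ) * ω),
           -((h₃ : ℂ) + (h₄ : ℂ) * ω) * Complex.exp (-(2 * Real.pi * Complex.I * z₁)),
           -((h₃ : ℂ) + (h₄ : ℂ) * ω) * Complex.exp (-(2 * Real.pi * Complex.I * z₂)))}) :
    {p : ℂ × ℂ × ℂ × ℂ × ℂ | p ∈ closure S ∧ ‖p.1‖ < 1 ∧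
        ‖p.2.1‖ < 1 ∧ p.1 * p.2.1 = 0} =
    {p : ℂ × ℂ × ℂ × ℂ × ℂ | ‖p.1‖ < 1 ∧ ‖p.2.1‖ < 1 ∧
        p.1 * p.2.1 = 0 ∧ (∃ h₁ h₂ : ℤ, p.2.2.1 = -((h₁ : ℂ) + (h₂ : ℂ) * ω)) ∧
        p.2.2.2.1 = 0 ∧ p.2.2.2.2 = 0} := by
  obtain rfl : S = integralPoints ω := hS
  ext ⟨s₁, s₂, v₀, v₁, v₂⟩
  constructor
  · rintro ⟨hp, hs₁, hs₂, hs⟩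
    exact ⟨hs₁, hs₂, hs, exists_lattice_and_eq_zero_of_mem_closure_integralPoints hω hp hs⟩
  · rintro ⟨hs₁, hs₂, hs, ⟨a, b, rfl⟩, rfl, rfl⟩
    exact ⟨mem_closure_integralPoints ω hs₁ hs₂ a b, hs₁, hs₂, hs⟩
end

section
/- The closure of A in ℂ³ contains the entire line {(0, 0, w) : w ∈ ℂ}. In fact already the subset of A with a = b = 0, namely {(e^{2πiz₁}, e^{2πiz₂}, z₂ − z₁) : z₁, z₂ ∈ ℍ}, has closure in ℂ³ containing {(0,0)} × ℂ. (In the paper this shows that the closure of the graph of an admissible normal function with a nontorsion singularity can have a positive-dimensional fiber over the origin.) -/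
/-! Along `z₁ = z`, `z₂ = z + w` with `Im z → ∞`, both exponentials tend to `0` while
`z₂ - z₁ = w` stays fixed; the points with `a = b = 0` are among those of `A`. -/

open Filter Complex Topology

open scoped Real

lemma tendsto_exp_two_pi_I_mul_comap_im_atTop :
    Tendsto (fun z : ℂ => exp (2 * π * I * z)) (comap im atTop) (𝓝 0) := by
  have h := (Function.Periodic.qParam_tendsto one_pos).mono_right nhdsWithin_le_nhds
  unfold Function.Periodic.qParam at h
  simpa only [Complex.ofReal_one, div_one] using h

lemma tendsto_add_const_comap_im_atTop (w : ℂ) :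
    Tendsto (· + w) (comap im atTop) (comap im atTop) := by
  rw [tendsto_comap_iff]
  simpa [Function.comp_def] using tendsto_atTop_add_const_right _ w.im tendsto_comap

instance comap_im_atTop_neBot : (comap im atTop).NeBot :=
  atTop_neBot.comap_of_surj fun y => ⟨y * I, by simp⟩

lemma zero_zero_mem_closure_exp_exp_sub (w : ℂ) :
    ((0 : ℂ), (0 : ℂ), w) ∈ closure {p : ℂ × ℂ × ℂ | ∃ z₁ z₂ : ℂ,
      0 < z₁.im ∧ 0 < z₂.im ∧ p = (exp (2 * π * I * z₁), exp (2 * π * I * z₂), z₂ - z₁)} := by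
  have hlim : Tendsto
      (fun z : ℂ => (exp (2 * π * I * z), exp (2 * π * I * (z + w)), z + w - z))
      (comap im atTop) (𝓝 ((0 : ℂ), (0 : ℂ), w)) :=
    tendsto_exp_two_pi_I_mul_comap_im_atTop.prodMk_nhds
      ((tendsto_exp_two_pi_I_mul_comap_im_atTop.comp
        (tendsto_add_const_comap_im_atTop w)).prodMk_nhds (by simp))
  have him : ∀ᶠ z in comap im atTop, 0 < z.im := tendsto_comap.eventually_gt_atTop 0
  refine mem_closure_of_tendsto hlim ?_
  filter_upwards [him, (tendsto_add_const_comap_im_atTop w).eventually him] with z h₁ h₂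
  exact ⟨z, z + w, h₁, h₂, rfl⟩

/-- The closure of the graph set `A` contains the whole line
`{(0,0,w) : w ∈ ℂ}`; in fact already the subset of `A` with `a = b = 0` has closure
containing this line. -/
theorem stmt14
    (A : Set (ℂ × ℂ × ℂ))
    (hA : A = {p | ∃ z₁ z₂ : ℂ, 0 < z₁.im ∧ 0 < z₂.im ∧ ∃ a b : ℤ,
      p = (Complex.exp (2 * Real.pi * Complex.I * z₁),
           Complex.exp (2 * Real.pi * Complex.I * z₂),
           (a : ℂ) - (b : ℂ) * (z₁ + z₂) + (z₂ - z₁))}) :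
    (∀ w : ℂ, ((0 : ℂ), (0 : ℂ), w) ∈
      closure {p : ℂ × ℂ × ℂ | ∃ z₁ z₂ : ℂ, 0 < z₁.im ∧ 0 < z₂.im ∧
        p = (Complex.exp (2 * Real.pi * Complex.I * z₁),
             Complex.exp (2 * Real.pi * Complex.I * z₂), z₂ - z₁)}) ∧
    (∀ w : ℂ, ((0 : ℂ), (0 : ℂ), w) ∈ closure A) := by
  refine ⟨zero_zero_mem_closure_exp_exp_sub, fun w =>
    closure_mono ?_ (zero_zero_mem_closure_exp_exp_sub w)⟩
  rintro p ⟨z₁, z₂, h₁, h₂, rfl⟩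
  subst hA
  exact ⟨z₁, z₂, h₁, h₂, 0, 0, by simp⟩
end

section
/- For every s₁ ∈ ℂ with 0 < |s₁| < 1, the set of w ∈ ℂ such that (s₁, 0, w) lies in the closure of A in ℂ³ is exactly {a − 2z₁ : a ∈ ℤ, z₁ ∈ ℍ, e^{2πiz₁} = s₁}; in particular, this fiber of the closure is a countable discrete subset of ℂ. -/
/-!
Write `e z = exp (2πiz)`. Along a sequence in `A` converging to `(s₁, 0, w)` with `s₁ ≠ 0`,
`Im z₁` stays bounded while `Im z₂ → ∞`; since the imaginary part of the third coordinate,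
`(1 - b) Im z₂ - (1 + b) Im z₁`, stays bounded, eventually `b = 1`. On the part of `A` with
`b = 1` the continuous function `(q₁, q₂, w) ↦ q₁² e(w)` is identically `1`, so the fiber is
contained in `{w | s₁² e(w) = 1}`; conversely every such `w` is a limit of points of `A` with
`b = 1` and `z₂ = i n`, `n → ∞`. The solutions of `s₁² e(w) = 1` form a translate of `ℤ`.
-/

open Complex Filter Topology Set
open scoped Real

lemma re_two_pi_I_mul (z : ℂ) : (2 * π * I * z).re = -(2 * π * z.im) := by
  simp [mul_re]

lemma norm_exp_two_pi_I_mul (z : ℂ) :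
    ‖cexp (2 * π * I * z)‖ = Real.exp (-(2 * π * z.im)) := by
  rw [norm_exp, re_two_pi_I_mul]

lemma norm_exp_two_pi_I_mul_lt_one_iff {z : ℂ} : ‖cexp (2 * π * I * z)‖ < 1 ↔ 0 < z.im := by
  rw [norm_exp_two_pi_I_mul, Real.exp_lt_one_iff, neg_lt_zero,
    mul_pos_iff_of_pos_left Real.two_pi_pos]

lemma exists_exp_two_pi_I_mul_eq {s : ℂ} (hs : s ≠ 0) : ∃ z, cexp (2 * π * I * z) = s :=
  ⟨log s / (2 * π * I), by rw [mul_div_cancel₀ _ two_pi_I_ne_zero, exp_log hs]⟩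

lemma sq_mul_exp_two_pi_I_mul_eq_one_iff {s z w : ℂ} (hz : cexp (2 * π * I * z) = s) :
    s ^ 2 * cexp (2 * π * I * w) = 1 ↔ ∃ a : ℤ, w = a - 2 * z := by
  have hprod : s ^ 2 * cexp (2 * π * I * w) = cexp ((2 * z + w) * (2 * π * I)) := by
    rw [← hz, sq, ← exp_add, ← exp_add]
    ring_nf
  rw [hprod, exp_eq_one_iff]
  exact exists_congr fun a => (mul_left_inj' two_pi_I_ne_zero).trans eq_sub_iff_add_eq'.symm

lemma setOf_sq_mul_exp_two_pi_I_mul_eq_one {s : ℂ} (hs₀ : s ≠ 0) (hs₁ : ‖s‖ < 1) :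
    {w : ℂ | s ^ 2 * cexp (2 * π * I * w) = 1} =
      {w : ℂ | ∃ a : ℤ, ∃ z : ℂ, 0 < z.im ∧ cexp (2 * π * I * z) = s ∧ w = a - 2 * z} := by
  ext w
  constructor
  · intro hw
    obtain ⟨z, hz⟩ := exists_exp_two_pi_I_mul_eq hs₀
    obtain ⟨a, rfl⟩ := (sq_mul_exp_two_pi_I_mul_eq_one_iff hz).1 hw
    exact ⟨a, z, norm_exp_two_pi_I_mul_lt_one_iff.1 (hz ▸ hs₁), hz, rfl⟩
  · rintro ⟨a, z, -, hz, rfl⟩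
    exact (sq_mul_exp_two_pi_I_mul_eq_one_iff hz).2 ⟨a, rfl⟩

lemma setOf_sq_mul_exp_two_pi_I_mul_eq_one_eq_range {s z : ℂ} (hz : cexp (2 * π * I * z) = s) :
    {w : ℂ | s ^ 2 * cexp (2 * π * I * w) = 1} = range fun n : ℤ => (n : ℂ) - 2 * z := by
  ext w
  simp only [mem_ofPred_eq, sq_mul_exp_two_pi_I_mul_eq_one_iff hz, mem_range, eq_comm]

lemma discreteTopology_range_intCast_sub (c : ℂ) :
    DiscreteTopology (range fun n : ℤ => (n : ℂ) - c) := by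
  refine .of_forall_le_dist one_pos ?_
  rintro ⟨_, m, rfl⟩ ⟨_, n, rfl⟩ hne
  have hmn : m - n ≠ 0 := sub_ne_zero.2 fun h => hne (by rw [h])
  rw [Subtype.dist_eq, dist_eq, sub_sub_sub_cancel_right, ← Int.cast_sub, norm_intCast]
  exact_mod_cast Int.one_le_abs hmn

section Limits

variable {ι : Type*} {l : Filter ι} {z : ι → ℂ}

lemma tendsto_im_of_tendsto_exp_two_pi_I_mul {s : ℂ} (hs : s ≠ 0)
    (h : Tendsto (fun i => cexp (2 * π * I * z i)) l (𝓝 s)) :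
    Tendsto (fun i => (z i).im) l (𝓝 (-Real.log ‖s‖ / (2 * π))) := by
  refine ((h.norm.log (norm_ne_zero_iff.2 hs)).neg.div_const (2 * π)).congr fun i => ?_
  rw [norm_exp_two_pi_I_mul, Real.log_exp]
  field_simp

lemma tendsto_im_atTop_of_tendsto_exp_two_pi_I_mul_zero
    (h : Tendsto (fun i => cexp (2 * π * I * z i)) l (𝓝 0)) :
    Tendsto (fun i => (z i).im) l atTop := by
  simp only [tendsto_exp_nhds_zero_iff, re_two_pi_I_mul, tendsto_neg_atBot_iff] at h
  exact (tendsto_const_mul_atTop_of_pos Real.two_pi_pos).1 h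

/-- With `yⱼ = Im zⱼ`, `(1 - b) y₂ - (1 + b) y₁` is the imaginary part of
`a - b (z₁ + z₂) + (z₂ - z₁)`. -/
lemma eventually_eq_one_of_isBoundedUnder {b : ι → ℤ} {y₁ y₂ : ι → ℝ} (hy₁ : ∀ i, 0 < y₁ i)
    (hy₁_bdd : IsBoundedUnder (· ≤ ·) l y₁) (hy₂ : Tendsto y₂ l atTop)
    (hbdd : IsBoundedUnder (· ≤ ·) l fun i => |(1 - b i) * y₂ i - (1 + b i) * y₁ i|) :
    ∀ᶠ i in l, b i = 1 := by
  obtain ⟨C₁, hC₁⟩ := hy₁_bdd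
  obtain ⟨C, hC⟩ := hbdd
  filter_upwards [eventually_map.1 hC₁, eventually_map.1 hC, hy₂.eventually_gt_atTop (C + C₁)]
    with i h₁ h h₂
  have hpos := hy₁ i
  have habs := abs_le.1 h
  by_contra hb
  rcases lt_or_gt_of_ne hb with hlt | hgt
  · have : (b i : ℝ) ≤ 0 := by exact_mod_cast Int.lt_add_one_iff.1 hlt
    nlinarith
  · have : (2 : ℝ) ≤ b i := by exact_mod_cast hgt
    nlinarith

end Limits

def setA : Set (ℂ × ℂ × ℂ) :=
  {p | ∃ z₁ z₂ : ℂ, 0 < z₁.im ∧ 0 < z₂.im ∧ ∃ a b : ℤ,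
    p = (cexp (2 * π * I * z₁), cexp (2 * π * I * z₂), (a : ℂ) - (b : ℂ) * (z₁ + z₂) + (z₂ - z₁))}

lemma mem_closure_setA {s z : ℂ} (hz : 0 < z.im) (hs : cexp (2 * π * I * z) = s) (a : ℤ) :
    (s, 0, (a : ℂ) - 2 * z) ∈ closure setA := by
  have him : ∀ n : ℕ, ((n + 1) * I).im = n + 1 := fun n => by simp
  have hmem : ∀ n : ℕ, (s, cexp (2 * π * I * ((n + 1) * I)), (a : ℂ) - 2 * z) ∈ setA :=
    fun n => ⟨z, (n + 1) * I, hz, him n ▸ n.cast_add_one_pos, a, 1,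
      Prod.ext hs.symm (Prod.ext rfl (by push_cast; ring))⟩
  have hlim : Tendsto (fun n : ℕ => cexp (2 * π * I * ((n + 1) * I))) atTop (𝓝 0) := by
    simp only [tendsto_exp_nhds_zero_iff, re_two_pi_I_mul, him, tendsto_neg_atBot_iff]
    exact (tendsto_natCast_atTop_atTop.atTop_add tendsto_const_nhds).const_mul_atTop
      Real.two_pi_pos
  exact mem_closure_of_tendsto
    (tendsto_const_nhds.prodMk_nhds (hlim.prodMk_nhds tendsto_const_nhds)) (.of_forall hmem)

lemma sq_mul_exp_two_pi_I_mul_eq_one_of_mem_closure_setA {s w : ℂ} (hs : s ≠ 0)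
    (h : (s, 0, w) ∈ closure setA) : s ^ 2 * cexp (2 * π * I * w) = 1 := by
  obtain ⟨p, hpA, hp⟩ := mem_closure_iff_seq_limit.1 h
  choose z₁ z₂ hz₁ hz₂ a b hpA using hpA
  obtain rfl : p = _ := funext hpA
  have h₁ := hp.fst_nhds
  have h₂ := hp.snd_nhds.fst_nhds
  have h₃ := hp.snd_nhds.snd_nhds
  have hb : ∀ᶠ n in atTop, b n = 1 := by
    refine eventually_eq_one_of_isBoundedUnder hz₁
      (tendsto_im_of_tendsto_exp_two_pi_I_mul hs h₁).isBoundedUnder_le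
      (tendsto_im_atTop_of_tendsto_exp_two_pi_I_mul_zero h₂) ?_
    have him : Tendsto (fun n => (1 - b n : ℝ) * (z₂ n).im - (1 + b n) * (z₁ n).im) atTop
        (𝓝 w.im) :=
      ((continuous_im.tendsto w).comp h₃).congr fun n => by
        simp only [Function.comp_apply, add_im, sub_im, intCast_im, mul_im, intCast_re, add_re,
          zero_mul, add_zero, zero_sub]
        ring
    exact him.abs.isBoundedUnder_le
  have hlim := (h₁.pow 2).mul ((continuous_exp.tendsto _).comp (h₃.const_mul (2 * π * I)))
  refine tendsto_nhds_unique hlim (tendsto_const_nhds.congr' ?_)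
  filter_upwards [hb] with n hbn
  refine ((sq_mul_exp_two_pi_I_mul_eq_one_iff rfl).2 ⟨a n, ?_⟩).symm
  rw [hbn]
  push_cast
  ring

lemma setOf_mem_closure_setA {s : ℂ} (hs₀ : s ≠ 0) (hs₁ : ‖s‖ < 1) :
    {w : ℂ | (s, 0, w) ∈ closure setA} = {w : ℂ | s ^ 2 * cexp (2 * π * I * w) = 1} := by
  refine Subset.antisymm (fun w => sq_mul_exp_two_pi_I_mul_eq_one_of_mem_closure_setA hs₀) ?_
  rw [setOf_sq_mul_exp_two_pi_I_mul_eq_one hs₀ hs₁]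
  rintro _ ⟨a, z, hz, hzs, rfl⟩
  exact mem_closure_setA hz hzs a

/-- For `0 < |s₁| < 1`, the fiber of the closure of `A` over `(s₁, 0)`
is exactly `{a - 2z₁ : a ∈ ℤ, z₁ ∈ ℍ, e^{2πiz₁} = s₁}`, a countable and discrete subset
of `ℂ`. -/
theorem stmt15
    (A : Set (ℂ × ℂ × ℂ))
    (hA : A = {p | ∃ z₁ z₂ : ℂ, 0 < z₁.im ∧ 0 < z₂.im ∧ ∃ a b : ℤ,
      p = (Complex.exp (2 * Real.pi * Complex.I * z₁),
           Complex.exp (2 * Real.pi * Complex.I * z₂),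
           (a : ℂ) - (b : ℂ) * (z₁ + z₂) + (z₂ - z₁))})
    (s₁ : ℂ) (hs₁0 : s₁ ≠ 0) (hs₁1 : ‖s₁‖ < 1) :
    {w : ℂ | (s₁, (0 : ℂ), w) ∈ closure A} =
      {w : ℂ | ∃ a : ℤ, ∃ z₁ : ℂ, 0 < z₁.im ∧
        Complex.exp (2 * Real.pi * Complex.I * z₁) = s₁ ∧ w = (a : ℂ) - 2 * z₁} ∧
    Set.Countable {w : ℂ | (s₁, (0 : ℂ), w) ∈ closure A} ∧
    DiscreteTopology {w : ℂ | (s₁, (0 : ℂ), w) ∈ closure A} := by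
  have hfiber : {w : ℂ | (s₁, (0 : ℂ), w) ∈ closure A} =
      {w : ℂ | s₁ ^ 2 * cexp (2 * π * I * w) = 1} := by
    subst hA
    exact setOf_mem_closure_setA hs₁0 hs₁1
  obtain ⟨z, hz⟩ := exists_exp_two_pi_I_mul_eq hs₁0
  have hrange := setOf_sq_mul_exp_two_pi_I_mul_eq_one_eq_range hz
  refine ⟨hfiber.trans (setOf_sq_mul_exp_two_pi_I_mul_eq_one hs₁0 hs₁1), ?_, ?_⟩ <;>
    rw [hfiber, hrange]
  · exact countable_range _
  · exact discreteTopology_range_intCast_sub _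
end

section
/- Let B = {(e^{2πiz}, (m + nτ)·e^{−πiz/3}) : z ∈ ℍ, (m,n) ∈ ℤ²} ⊆ ℂ². Then the intersection of the closure of B in the set {(s,v) ∈ ℂ² : |s| < 1} with the locus {s = 0} is the single point (0, 0). (In the paper this shows that, for the order-six quotient family of elliptic curves, the closure of the family of integral lattices inside the dual Hodge line bundle adds only one point over the origin, so that the fiber of J̄(ℋ) over 0 is a copy of ℂ.) -/
/-!
On `B` the two coordinates are tied by `s * v ^ 6 = (m + n τ) ^ 6`, because
`e^{2πiz} (e^{-πiz/3})^6 = 1`. The Eisenstein lattice `ℤ[τ]` is discrete (`|m + nτ|² = m² + mn + n²`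
is an integer), so every point of `B` has `v = 0` or `|s v⁶| ≥ 1`. This condition is closed, and at
`s = 0` it forces `v = 0`. Conversely `(e^{2πi·it}, 0) ∈ B` tends to `(0, 0)` as `t → ∞`.
-/

open Complex Filter Topology
open scoped Real

lemma Complex.eq_zero_or_one_le_norm_of_normSq_eq_intCast {x : ℂ} {k : ℤ} (h : normSq x = k) :
    x = 0 ∨ 1 ≤ ‖x‖ := by
  rcases eq_or_ne x 0 with hx | hx
  · exact .inl hx
  have hk : 0 < k := by exact_mod_cast h ▸ normSq_pos.mpr hx
  right
  rw [← one_le_sq_iff₀ (norm_nonneg x), Complex.sq_norm, h]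
  exact_mod_cast hk

lemma normSq_intCast_add_intCast_mul_exp_pi_mul_I_div_three (m n : ℤ) :
    normSq (m + n * exp (π * I / 3)) = ((m ^ 2 + m * n + n ^ 2 : ℤ) : ℝ) := by
  have hre : (exp (π * I / 3)).re = 1 / 2 := by
    rw [exp_re]; simp [Real.cos_pi_div_three]
  have him : (exp (π * I / 3)).im = √3 / 2 := by
    rw [exp_im]; simp [Real.sin_pi_div_three]
  have h3 : √3 ^ 2 = 3 := Real.sq_sqrt (by norm_num)
  simp only [normSq_apply, add_re, add_im, mul_re, mul_im, intCast_re, intCast_im, hre, him]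
  push_cast
  linear_combination (n : ℝ) ^ 2 / 4 * h3

lemma exp_two_pi_I_mul_mul_exp_neg_pi_I_mul_div_three_pow_six (z : ℂ) :
    exp (2 * π * I * z) * exp (-(π * I * z / 3)) ^ 6 = 1 := by
  rw [← exp_nat_mul, ← exp_add, ← exp_zero]
  ring_nf

lemma snd_eq_zero_of_mem_closure_of_fst_eq_zero {S : Set (ℂ × ℂ)} {k : ℕ}
    (hS : ∀ p ∈ S, p.2 = 0 ∨ 1 ≤ ‖p.1 * p.2 ^ k‖) {p : ℂ × ℂ} (hp : p ∈ closure S)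
    (h1 : p.1 = 0) : p.2 = 0 := by
  have hcont : Continuous fun p : ℂ × ℂ => ‖p.1 * p.2 ^ k‖ := by fun_prop
  have hclosed : IsClosed {p : ℂ × ℂ | p.2 = 0 ∨ 1 ≤ ‖p.1 * p.2 ^ k‖} :=
    (isClosed_eq continuous_snd continuous_const).union (isClosed_le continuous_const hcont)
  have hp' : p.2 = 0 ∨ 1 ≤ ‖p.1 * p.2 ^ k‖ := closure_minimal hS hclosed hp
  exact hp'.resolve_right (by simp [h1])

lemma zero_mem_closure_exp_two_pi_I_mul :
    ((0 : ℂ), (0 : ℂ)) ∈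
      closure {p : ℂ × ℂ | ∃ z : ℂ, 0 < z.im ∧ p = (exp (2 * π * I * z), 0)} := by
  have hlim : Tendsto (fun t : ℝ => exp (2 * π * I * (t * I))) atTop (𝓝 0) := by
    rw [tendsto_exp_nhds_zero_iff]
    have : ∀ t : ℝ, (2 * π * I * (t * I)).re = -(2 * π) * t := fun t => by simp
    have hneg : -(2 * π) < 0 := by linarith [Real.pi_pos]
    simpa [this] using tendsto_id.const_mul_atTop_of_neg hneg
  refine mem_closure_of_tendsto (hlim.prodMk_nhds tendsto_const_nhds) ?_
  filter_upwards [eventually_gt_atTop 0] with t ht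
  exact ⟨t * I, by simpa using ht, rfl⟩

/-- For `τ = e^{iπ/3}`, the closure of
`B = {(e^{2πiz}, (m + nτ)e^{-πiz/3}) : z ∈ ℍ, (m,n) ∈ ℤ²}` inside `{(s,v) : |s| < 1}`,
intersected with the locus `s = 0`, is the single point `(0, 0)`. -/
theorem stmt16
    (τ : ℂ) (hτ : τ = Complex.exp (Real.pi * Complex.I / 3))
    (B : Set (ℂ × ℂ))
    (hB : B = {p | ∃ z : ℂ, 0 < z.im ∧ ∃ m n : ℤ,
      p = (Complex.exp (2 * Real.pi * Complex.I * z),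
           ((m : ℂ) + (n : ℂ) * τ) * Complex.exp (-(Real.pi * Complex.I * z / 3)))}) :
    {p : ℂ × ℂ | p ∈ closure B ∧ ‖p.1‖ < 1 ∧ p.1 = 0} =
      {((0 : ℂ), (0 : ℂ))} := by
  subst hτ hB
  ext ⟨s, v⟩
  simp only [Set.mem_ofPred_eq, Set.mem_singleton_iff, Prod.mk.injEq]
  constructor
  · rintro ⟨hcl, -, rfl⟩
    refine ⟨rfl, snd_eq_zero_of_mem_closure_of_fst_eq_zero (k := 6) ?_ hcl rfl⟩
    rintro _ ⟨z, -, m, n, rfl⟩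
    set w : ℂ := m + n * exp (π * I / 3)
    have hs : exp (2 * π * I * z) * (w * exp (-(π * I * z / 3))) ^ 6 = w ^ 6 := by
      rw [mul_pow, mul_left_comm, exp_two_pi_I_mul_mul_exp_neg_pi_I_mul_div_three_pow_six, mul_one]
    rcases eq_zero_or_one_le_norm_of_normSq_eq_intCast
      (normSq_intCast_add_intCast_mul_exp_pi_mul_I_div_three m n) with hw | hw
    · left; simp [w, hw]
    · right; rw [hs, norm_pow]; exact one_le_pow₀ hw
  · rintro ⟨rfl, rfl⟩
    refine ⟨closure_mono ?_ zero_mem_closure_exp_two_pi_I_mul, by simp, rfl⟩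
    rintro _ ⟨z, hz, rfl⟩
    exact ⟨z, hz, 0, 0, by simp⟩
end
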